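/- arXiv:1801.10505 — 7 statements merged into one kernel-verified Lean document; each statement's English description precedes it below -/
import Mathlib

section
/- Suppose each V_i is an SStF from Σ̂_i to Σ_i with data (α_i, κ_i, ρ_i, ψ_i, G_i, Ĝ_i, H_i, X̄_i), and suppose there exist μ_1,…,μ_N > 0 and a coupling matrix M̂ for the abstract interconnection such that the matrix [GM; I_{q̃}]ᵀ X_cmp [GM; I_{q̃}] is negative semidefinite and GMH = ĜM̂. Then V(x, x̂) := Σ_{i=1}^N μ_i V_i(x_i, x̂_i) is a stochastic simulation function from 𝓘(Σ̂_1,…,Σ̂_N) (with coupling M̂) to 𝓘(Σ_1,…,Σ_N) (with coupling M); i.e.: (a) α(‖h(x) − ĥ(x̂)‖) ≤ V(x, x̂) for all x, x̂, where α := ᾱ^{-1} and ᾱ(r) := max{ Σ_{i=1}^N α_i^{-1}(s_i) : s_i ≥ 0, Σ_{i=1}^N μ_i s_i = r } is a class-K∞ function; and (b) for all x, x̂ and all ν̂ = (ν̂_1,…,ν̂_N) there exists ν = (ν_1,…,ν_N) such that, with w = M·[h_{21}(x_1);…;h_{2N}(x_N)] and ŵ = M̂·[ĥ_{21}(x̂_1);…;ĥ_{2N}(x̂_N)]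 (with block components w_i, ŵ_i), Σ_{i=1}^N μ_i ∫∫ V_i(f_i(x_i, ν_i, w_i, v), f̂_i(x̂_i, ν̂_i, ŵ_i, v̂)) dμ_i(v) dμ̂_i(v̂) − V(x, x̂) ≤ −κ(V(x, x̂)) + ρ_ext(‖ν̂‖) + ψ, where κ(r) := min{ Σ_i μ_i κ_i(s_i) : s_i ≥ 0, Σ_i μ_i s_i = r } is of class K, ρ_ext(r) := max{ Σ_i μ_i ρ_i(s_i) : s_i ≥ 0, ‖(s_1,…,s_N)‖ = r } is of class K∞ ∪ {0}, and ψ := Σ_{i=1}^N μ_i ψ_i. -/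
/-!
Summing the dissipation inequalities of the subsystems with weights `μ i`, the condition
`GMH = ĜM̂` turns the stacked supply rates into the quadratic form of
`[GM; I]ᵀ X_cmp [GM; I]` at `y − H ŷ` (`y`, `ŷ` the stacked internal outputs), which the LMI makes
nonpositive. The remaining terms are controlled by the value functions `ᾱ`, `κ`, `ρ_ext`.
Each is the optimal value of `∑ i, h i (s i)` over a slice `{s ≥ 0 | φ s = r}` of the orthant,
where `φ` is positively homogeneous and coercive on the orthant, so the slices are compact and
are all rescalings of the unit slice. Optima are therefore attained and depend continuously on
`r` (a supremum over a fixed compact set of a jointly continuous function), and rescaling an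
optimiser gives strict monotonicity.
-/

open MeasureTheory Matrix Set Filter

structure IsClassK (γ : ℝ → ℝ) : Prop where
  continuousOn : ContinuousOn γ (Ici 0)
  strictMonoOn : StrictMonoOn γ (Ici 0)
  map_zero : γ 0 = 0

structure IsClassKInf (γ : ℝ → ℝ) : Prop extends IsClassK γ where
  tendsto_atTop : Tendsto γ atTop atTop

lemma continuousOn_Ici_of_monotoneOn_of_surjOn {f : ℝ → ℝ} {a : ℝ}
    (hf : MonotoneOn f (Ici a)) (hs : SurjOn f (Ici a) (Ici (f a))) :
    ContinuousOn f (Ici a) := by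
  -- extend `f` to a monotone surjection of `ℝ` by a translate of the identity on `Iic a`
  set g : ℝ → ℝ := fun t => f (max t a) + min (t - a) 0
  have hg_mono : Monotone g := fun s t hst =>
    add_le_add (hf (le_max_right s a) (le_max_right t a) (max_le_max_right a hst))
      (min_le_min_right 0 (by linarith))
  have hg_surj : Function.Surjective g := by
    intro y
    rcases le_or_gt (f a) y with hy | hy
    · obtain ⟨t, ht, rfl⟩ := hs hy
      exact ⟨t, by simp [g, max_eq_left (mem_Ici.1 ht), sub_nonneg.2 (mem_Ici.1 ht)]⟩
    · exact ⟨a + (y - f a), by simp [g, hy.le]⟩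
  refine (hg_mono.continuous_of_surjective hg_surj).continuousOn.congr fun t ht => ?_
  simp [g, max_eq_left (mem_Ici.1 ht), sub_nonneg.2 (mem_Ici.1 ht)]

namespace IsClassK

variable {γ : ℝ → ℝ}

lemma monotoneOn (hγ : IsClassK γ) : MonotoneOn γ (Ici 0) := hγ.strictMonoOn.monotoneOn

lemma nonneg (hγ : IsClassK γ) {t : ℝ} (ht : 0 ≤ t) : 0 ≤ γ t :=
  hγ.map_zero ▸ hγ.monotoneOn self_mem_Ici ht ht

lemma pos (hγ : IsClassK γ) {t : ℝ} (ht : 0 < t) : 0 < γ t :=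
  hγ.map_zero ▸ hγ.strictMonoOn self_mem_Ici ht.le ht

lemma const_mul (hγ : IsClassK γ) {c : ℝ} (hc : 0 < c) : IsClassK fun t => c * γ t :=
  ⟨continuousOn_const.mul hγ.continuousOn,
    fun _ ha _ hb hab => mul_lt_mul_of_pos_left (hγ.strictMonoOn ha hb hab) hc,
    by simp [hγ.map_zero]⟩

end IsClassK

section OrZero

variable {γ : ℝ → ℝ}

lemma continuousOn_of_isClassK_or_eq_zero (hγ : IsClassK γ ∨ γ = 0) :
    ContinuousOn γ (Ici 0) :=
  hγ.elim IsClassK.continuousOn fun h => h ▸ continuousOn_const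

lemma monotoneOn_of_isClassK_or_eq_zero (hγ : IsClassK γ ∨ γ = 0) : MonotoneOn γ (Ici 0) :=
  hγ.elim IsClassK.monotoneOn fun h => h ▸ monotoneOn_const

lemma map_zero_of_isClassK_or_eq_zero (hγ : IsClassK γ ∨ γ = 0) : γ 0 = 0 :=
  hγ.elim IsClassK.map_zero fun h => h ▸ rfl

end OrZero

namespace IsClassKInf

variable {γ γinv : ℝ → ℝ}

lemma const_mul (hγ : IsClassKInf γ) {c : ℝ} (hc : 0 < c) : IsClassKInf fun t => c * γ t :=
  ⟨hγ.toIsClassK.const_mul hc, hγ.tendsto_atTop.const_mul_atTop hc⟩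

lemma bijOn (hγ : IsClassKInf γ) : BijOn γ (Ici 0) (Ici 0) :=
  ⟨fun _ ht => hγ.nonneg ht, hγ.strictMonoOn.injOn, by
    simpa [SurjOn, hγ.map_zero] using intermediate_value_Ici hγ.continuousOn hγ.tendsto_atTop⟩

lemma exists_invOn (hγ : IsClassKInf γ) : ∃ γinv, InvOn γinv γ (Ici 0) (Ici 0) :=
  ⟨_, hγ.bijOn.invOn_invFunOn⟩

lemma of_invOn (hγ : IsClassKInf γ) (hinv : InvOn γinv γ (Ici 0) (Ici 0)) :
    IsClassKInf γinv := by
  have hbij : BijOn γinv (Ici 0) (Ici 0) := hγ.bijOn.symm hinv.symm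
  have hzero : γinv 0 = 0 := by simpa [hγ.map_zero] using hinv.1 (self_mem_Ici (a := (0 : ℝ)))
  have hmono : StrictMonoOn γinv (Ici 0) := fun s hs t ht hst => by
    rwa [← hγ.strictMonoOn.lt_iff_lt (hbij.mapsTo hs) (hbij.mapsTo ht), hinv.2 hs, hinv.2 ht]
  refine ⟨⟨continuousOn_Ici_of_monotoneOn_of_surjOn hmono.monotoneOn
    (by simpa [hzero] using hbij.surjOn), hmono, hzero⟩, ?_⟩
  refine tendsto_atTop_atTop.2 fun b => ⟨γ (max b 0), fun t ht => ?_⟩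
  have hb : max b 0 ∈ Ici 0 := le_max_right b 0
  calc b ≤ max b 0 := le_max_left b 0
    _ = γinv (γ (max b 0)) := (hinv.1 hb).symm
    _ ≤ γinv t := hmono.monotoneOn (hγ.bijOn.mapsTo hb) ((hγ.bijOn.mapsTo hb).trans ht) ht

lemma map_le_iff_le (hγ : IsClassKInf γ) (hinv : InvOn γinv γ (Ici 0) (Ici 0)) {t v : ℝ}
    (ht : 0 ≤ t) (hv : 0 ≤ v) : γ t ≤ v ↔ t ≤ γinv v := by
  have hv' : γinv v ∈ Ici 0 := (hγ.bijOn.symm hinv.symm).mapsTo hv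
  conv_lhs => rw [← hinv.2 hv]
  exact hγ.strictMonoOn.le_iff_le ht hv'

end IsClassKInf

structure IsOrthantGauge {n : ℕ} (φ : (Fin n → ℝ) → ℝ) : Prop where
  continuous : Continuous φ
  map_smul : ∀ c : ℝ, 0 ≤ c → ∀ s, φ (c • s) = c * φ s
  nonneg : ∀ s, (∀ i, 0 ≤ s i) → 0 ≤ φ s
  exists_le_mul : ∃ C, ∀ s, (∀ i, 0 ≤ s i) → ∀ i, s i ≤ C * φ s

def orthantLevel {n : ℕ} (φ : (Fin n → ℝ) → ℝ) (r : ℝ) : Set (Fin n → ℝ) :=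
  {s | (∀ i, 0 ≤ s i) ∧ φ s = r}

-- `ᾱ`, `κ` and `ρ_ext` are `sSup`/`sInf` of these sets, `φ` being `s ↦ ∑ i, μ i * s i` or the
-- Euclidean norm.
def feasibleValues {n : ℕ} (φ : (Fin n → ℝ) → ℝ) (h : Fin n → ℝ → ℝ) (r : ℝ) : Set ℝ :=
  {t | ∃ s : Fin n → ℝ, (∀ i, 0 ≤ s i) ∧ φ s = r ∧ t = ∑ i, h i (s i)}

lemma feasibleValues_eq_image {n : ℕ} (φ : (Fin n → ℝ) → ℝ) (h : Fin n → ℝ → ℝ) (r : ℝ) :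
    feasibleValues φ h r = (fun s => ∑ i, h i (s i)) '' orthantLevel φ r := by
  ext t
  exact ⟨fun ⟨s, hs, hφs, ht⟩ => ⟨s, ⟨hs, hφs⟩, ht.symm⟩,
    fun ⟨s, ⟨hs, hφs⟩, ht⟩ => ⟨s, hs, hφs, ht.symm⟩⟩

lemma sSup_feasibleValues_of_eq_zero {n : ℕ} (φ : (Fin n → ℝ) → ℝ) {h : Fin n → ℝ → ℝ}
    (hh : ∀ i, h i = 0) (r : ℝ) : sSup (feasibleValues φ h r) = 0 := by
  have hmem : ∀ t ∈ feasibleValues φ h r, t = 0 := by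
    rintro t ⟨s, -, -, rfl⟩
    simp [hh]
  exact le_antisymm (Real.sSup_nonpos fun t ht => (hmem t ht).le)
    (Real.sSup_nonneg fun t ht => (hmem t ht).ge)

lemma sum_comp_mul_lt_sum {ι : Type*} [Fintype ι] {h : ι → ℝ → ℝ} {s : ι → ℝ} {c : ℝ}
    (hh : ∀ i, MonotoneOn (h i) (Ici 0)) (hs : ∀ i, 0 ≤ s i) (hc₀ : 0 ≤ c) (hc₁ : c < 1)
    {j : ι} (hj : StrictMonoOn (h j) (Ici 0)) (hsj : 0 < s j) :
    ∑ i, h i (c * s i) < ∑ i, h i (s i) :=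
  Finset.sum_lt_sum
    (fun i _ => hh i (mul_nonneg hc₀ (hs i)) (hs i) (mul_le_of_le_one_left (hs i) hc₁.le))
    ⟨j, Finset.mem_univ j, hj (mul_nonneg hc₀ (hs j)) (hs j) (mul_lt_of_lt_one_left hsj hc₁)⟩

namespace IsOrthantGauge

variable {n : ℕ} {φ : (Fin n → ℝ) → ℝ} {h : Fin n → ℝ → ℝ}

lemma map_zero (hφ : IsOrthantGauge φ) : φ 0 = 0 := by
  simpa using hφ.map_smul 0 le_rfl 0

lemma eq_zero_of_map_eq_zero (hφ : IsOrthantGauge φ) {s : Fin n → ℝ} (hs : ∀ i, 0 ≤ s i)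
    (h0 : φ s = 0) : s = 0 := by
  obtain ⟨C, hC⟩ := hφ.exists_le_mul
  funext i
  exact le_antisymm (by simpa [h0] using hC s hs i) (hs i)

lemma map_single_pos (hφ : IsOrthantGauge φ) (j : Fin n) : 0 < φ (Pi.single j 1) := by
  have hnn : ∀ i, 0 ≤ (Pi.single j 1 : Fin n → ℝ) i := fun i => by
    by_cases hij : i = j <;> simp [hij]
  refine (hφ.nonneg _ hnn).lt_of_ne fun h0 => ?_
  obtain ⟨C, hC⟩ := hφ.exists_le_mul
  linarith [h0 ▸ hC _ hnn j, show (Pi.single j 1 : Fin n → ℝ) j = 1 from Pi.single_eq_same j 1]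

lemma smul_mem_orthantLevel (hφ : IsOrthantGauge φ) {r c : ℝ} (hc : 0 ≤ c) {s : Fin n → ℝ}
    (hs : s ∈ orthantLevel φ r) : c • s ∈ orthantLevel φ (c * r) :=
  ⟨fun i => mul_nonneg hc (hs.1 i), by rw [hφ.map_smul c hc, hs.2]⟩

lemma single_mem_orthantLevel (hφ : IsOrthantGauge φ) (j : Fin n) :
    (φ (Pi.single j 1))⁻¹ • Pi.single j 1 ∈ orthantLevel φ 1 := by
  have hpos := hφ.map_single_pos j
  refine ⟨fun i => mul_nonneg (inv_nonneg.2 hpos.le) ?_, ?_⟩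
  · by_cases hij : i = j <;> simp [hij]
  · rw [hφ.map_smul _ (inv_nonneg.2 hpos.le), inv_mul_cancel₀ hpos.ne']

lemma isCompact_orthantLevel (hφ : IsOrthantGauge φ) (r : ℝ) : IsCompact (orthantLevel φ r) := by
  obtain ⟨C, hC⟩ := hφ.exists_le_mul
  refine (isCompact_univ_pi fun _ => isCompact_Icc (a := 0) (b := C * r)).of_isClosed_subset
    ((isClosed_le continuous_const continuous_id).inter
      (isClosed_eq hφ.continuous continuous_const))
    fun s hs i _ => ⟨hs.1 i, hs.2 ▸ hC s hs.1 i⟩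

lemma orthantLevel_eq_smul_image [Nonempty (Fin n)] (hφ : IsOrthantGauge φ) {r : ℝ} (hr : 0 ≤ r) :
    orthantLevel φ r = (r • ·) '' orthantLevel φ 1 := by
  refine Subset.antisymm ?_ ?_
  · rintro s ⟨hs, rfl⟩
    rcases (hφ.nonneg s hs).eq_or_lt with h0 | hpos
    · refine ⟨_, hφ.single_mem_orthantLevel (Classical.arbitrary _), ?_⟩
      dsimp only
      rw [← h0, zero_smul, hφ.eq_zero_of_map_eq_zero hs h0.symm]
    · refine ⟨(φ s)⁻¹ • s, ?_, smul_inv_smul₀ hpos.ne' s⟩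
      simpa [inv_mul_cancel₀ hpos.ne'] using
        hφ.smul_mem_orthantLevel (inv_nonneg.2 hpos.le)
          (show s ∈ orthantLevel φ (φ s) from ⟨hs, rfl⟩)
  · rintro _ ⟨u, hu, rfl⟩
    simpa using hφ.smul_mem_orthantLevel hr hu

lemma isCompact_feasibleValues (hφ : IsOrthantGauge φ) (hc : ∀ i, ContinuousOn (h i) (Ici 0))
    (r : ℝ) : IsCompact (feasibleValues φ h r) := by
  rw [feasibleValues_eq_image]
  exact (hφ.isCompact_orthantLevel r).image_of_continuousOn <| continuousOn_finsetSum _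
    fun i _ => (hc i).comp (continuous_apply i).continuousOn fun _ hs => hs.1 i

lemma single_mem_feasibleValues (hφ : IsOrthantGauge φ) (h0 : ∀ i, h i 0 = 0) (j : Fin n)
    {r : ℝ} (hr : 0 ≤ r) : h j (r / φ (Pi.single j 1)) ∈ feasibleValues φ h r := by
  rw [feasibleValues_eq_image]
  refine ⟨_, by simpa using hφ.smul_mem_orthantLevel hr (hφ.single_mem_orthantLevel j), ?_⟩
  dsimp only
  rw [Fintype.sum_eq_single j fun i hij => by simp [hij, h0]]
  simp [div_eq_mul_inv]

lemma feasibleValues_nonempty [Nonempty (Fin n)] (hφ : IsOrthantGauge φ) (h0 : ∀ i, h i 0 = 0)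
    {r : ℝ} (hr : 0 ≤ r) : (feasibleValues φ h r).Nonempty :=
  ⟨_, hφ.single_mem_feasibleValues h0 (Classical.arbitrary _) hr⟩

lemma feasibleValues_zero (hφ : IsOrthantGauge φ) (h0 : ∀ i, h i 0 = 0) :
    feasibleValues φ h 0 = {0} := by
  ext t
  constructor
  · rintro ⟨s, hs, hφs, rfl⟩
    simp [hφ.eq_zero_of_map_eq_zero hs hφs, h0]
  · rintro rfl
    exact ⟨0, fun _ => le_rfl, hφ.map_zero, by simp [h0]⟩

lemma exists_sum_eq_sSup [Nonempty (Fin n)] (hφ : IsOrthantGauge φ)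
    (hc : ∀ i, ContinuousOn (h i) (Ici 0)) (h0 : ∀ i, h i 0 = 0) {r : ℝ} (hr : 0 ≤ r) :
    ∃ s : Fin n → ℝ, (∀ i, 0 ≤ s i) ∧ φ s = r ∧
      ∑ i, h i (s i) = sSup (feasibleValues φ h r) := by
  obtain ⟨s, hs, hφs, hsum⟩ :=
    (hφ.isCompact_feasibleValues hc r).sSup_mem (hφ.feasibleValues_nonempty h0 hr)
  exact ⟨s, hs, hφs, hsum.symm⟩

lemma exists_sum_eq_sInf [Nonempty (Fin n)] (hφ : IsOrthantGauge φ)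
    (hc : ∀ i, ContinuousOn (h i) (Ici 0)) (h0 : ∀ i, h i 0 = 0) {r : ℝ} (hr : 0 ≤ r) :
    ∃ s : Fin n → ℝ, (∀ i, 0 ≤ s i) ∧ φ s = r ∧
      ∑ i, h i (s i) = sInf (feasibleValues φ h r) := by
  obtain ⟨s, hs, hφs, hsum⟩ :=
    (hφ.isCompact_feasibleValues hc r).sInf_mem (hφ.feasibleValues_nonempty h0 hr)
  exact ⟨s, hs, hφs, hsum.symm⟩

lemma sum_le_sSup (hφ : IsOrthantGauge φ) (hc : ∀ i, ContinuousOn (h i) (Ici 0))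
    {s : Fin n → ℝ} (hs : ∀ i, 0 ≤ s i) : ∑ i, h i (s i) ≤ sSup (feasibleValues φ h (φ s)) :=
  le_csSup (hφ.isCompact_feasibleValues hc _).bddAbove ⟨s, hs, rfl, rfl⟩

lemma sInf_le_sum (hφ : IsOrthantGauge φ) (hc : ∀ i, ContinuousOn (h i) (Ici 0))
    {s : Fin n → ℝ} (hs : ∀ i, 0 ≤ s i) : sInf (feasibleValues φ h (φ s)) ≤ ∑ i, h i (s i) :=
  csInf_le (hφ.isCompact_feasibleValues hc _).bddBelow ⟨s, hs, rfl, rfl⟩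

lemma exists_continuous_image_eq [Nonempty (Fin n)] (hφ : IsOrthantGauge φ)
    (hc : ∀ i, ContinuousOn (h i) (Ici 0)) :
    ∃ F : ℝ → (Fin n → ℝ) → ℝ, Continuous ↿F ∧
      ∀ r ∈ Ici (0 : ℝ), feasibleValues φ h r = F r '' orthantLevel φ 1 := by
  refine ⟨fun r u => ∑ i, h i (max (r * u i) 0), ?_, fun r hr => ?_⟩
  · show Continuous fun p : ℝ × (Fin n → ℝ) => ∑ i, h i (max (p.1 * p.2 i) 0)
    exact continuous_finsetSum _ fun i _ =>
      (hc i).comp_continuous (f := fun p : ℝ × (Fin n → ℝ) => max (p.1 * p.2 i) 0)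
        (by fun_prop) fun _ => mem_Ici.2 (le_max_right _ 0)
  · rw [feasibleValues_eq_image, hφ.orthantLevel_eq_smul_image hr, image_image]
    refine image_congr fun u hu => Finset.sum_congr rfl fun i _ => ?_
    simp [max_eq_left (mul_nonneg (mem_Ici.1 hr) (hu.1 i))]

lemma continuousOn_sSup_feasibleValues [Nonempty (Fin n)] (hφ : IsOrthantGauge φ)
    (hc : ∀ i, ContinuousOn (h i) (Ici 0)) :
    ContinuousOn (fun r => sSup (feasibleValues φ h r)) (Ici 0) := by
  obtain ⟨F, hF, hFeq⟩ := hφ.exists_continuous_image_eq hc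
  exact ((hφ.isCompact_orthantLevel 1).continuous_sSup hF).continuousOn.congr
    fun r hr => by rw [hFeq r hr]

lemma continuousOn_sInf_feasibleValues [Nonempty (Fin n)] (hφ : IsOrthantGauge φ)
    (hc : ∀ i, ContinuousOn (h i) (Ici 0)) :
    ContinuousOn (fun r => sInf (feasibleValues φ h r)) (Ici 0) := by
  obtain ⟨F, hF, hFeq⟩ := hφ.exists_continuous_image_eq hc
  exact ((hφ.isCompact_orthantLevel 1).continuous_sInf hF).continuousOn.congr
    fun r hr => by rw [hFeq r hr]

lemma strictMonoOn_sSup_feasibleValues (hφ : IsOrthantGauge φ)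
    (hh : ∀ i, IsClassK (h i) ∨ h i = 0) (j : Fin n) (hj : IsClassK (h j)) :
    StrictMonoOn (fun r => sSup (feasibleValues φ h r)) (Ici 0) := by
  have : Nonempty (Fin n) := ⟨j⟩
  have hc i := continuousOn_of_isClassK_or_eq_zero (hh i)
  have h0 i := map_zero_of_isClassK_or_eq_zero (hh i)
  have hpos : ∀ r, 0 < r → 0 < sSup (feasibleValues φ h r) := fun r hr =>
    (hj.pos (div_pos hr (hφ.map_single_pos j))).trans_le <| le_csSup
      (hφ.isCompact_feasibleValues hc r).bddAbove (hφ.single_mem_feasibleValues h0 j hr.le)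
  intro r hr r' hr' hlt
  rcases (mem_Ici.1 hr).eq_or_lt with rfl | hr₀
  · simpa [hφ.feasibleValues_zero h0] using hpos r' hlt
  obtain ⟨s, hs, rfl, hsum⟩ := hφ.exists_sum_eq_sSup hc h0 hr
  -- a maximiser of positive value has a coordinate on which some `h i` is strictly increasing
  obtain ⟨i, -, hi⟩ := Finset.exists_lt_of_sum_lt (s := Finset.univ) (f := fun _ => (0 : ℝ))
    (g := fun k => h k (s k)) (by rw [Finset.sum_const_zero, hsum]; exact hpos _ hr₀)
  have hhi : IsClassK (h i) := (hh i).resolve_right fun h' => by simp [h'] at hi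
  have hsi : 0 < s i := (hs i).lt_of_ne fun h' => by simp [← h', hhi.map_zero] at hi
  set c := φ s / r'
  have hc₀ : 0 < c := div_pos hr₀ (hr₀.trans hlt)
  have hs' : ∀ k, 0 ≤ c⁻¹ * s k := fun k => mul_nonneg (inv_nonneg.2 hc₀.le) (hs k)
  calc sSup (feasibleValues φ h (φ s)) = ∑ k, h k (c * (c⁻¹ * s k)) := by
        simp [← hsum, hc₀.ne']
    _ < ∑ k, h k (c⁻¹ * s k) :=
        sum_comp_mul_lt_sum (fun k => monotoneOn_of_isClassK_or_eq_zero (hh k)) hs' hc₀.le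
          ((div_lt_one (hr₀.trans hlt)).2 hlt) hhi.strictMonoOn (mul_pos (inv_pos.2 hc₀) hsi)
    _ ≤ sSup (feasibleValues φ h (φ (c⁻¹ • s))) := hφ.sum_le_sSup hc (s := c⁻¹ • s) hs'
    _ = sSup (feasibleValues φ h r') := by
        rw [hφ.map_smul _ (inv_nonneg.2 hc₀.le), inv_div, div_mul_cancel₀ _ hr₀.ne']

lemma strictMonoOn_sInf_feasibleValues [Nonempty (Fin n)] (hφ : IsOrthantGauge φ)
    (hh : ∀ i, IsClassK (h i)) :
    StrictMonoOn (fun r => sInf (feasibleValues φ h r)) (Ici 0) := by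
  have hc i := (hh i).continuousOn
  intro r hr r' hr' hlt
  have hr'₀ : 0 < r' := (mem_Ici.1 hr).trans_lt hlt
  obtain ⟨s, hs, rfl, hsum⟩ := hφ.exists_sum_eq_sInf hc (fun i => (hh i).map_zero) hr'
  have hs₀ : s ≠ 0 := by
    rintro rfl
    exact hr'₀.ne' hφ.map_zero
  obtain ⟨i, hi⟩ := Function.ne_iff.1 hs₀
  set c := r / φ s
  have hc₀ : 0 ≤ c := div_nonneg hr hr'₀.le
  calc sInf (feasibleValues φ h r) = sInf (feasibleValues φ h (φ (c • s))) := by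
        rw [hφ.map_smul c hc₀, div_mul_cancel₀ _ hr'₀.ne']
    _ ≤ ∑ k, h k (c * s k) := hφ.sInf_le_sum hc fun k => mul_nonneg hc₀ (hs k)
    _ < ∑ k, h k (s k) :=
        sum_comp_mul_lt_sum (fun k => (hh k).monotoneOn) hs hc₀ ((div_lt_one hr'₀).2 hlt)
          (hh i).strictMonoOn ((hs i).lt_of_ne' hi)
    _ = sInf (feasibleValues φ h (φ s)) := hsum

lemma isClassK_sInf_feasibleValues [Nonempty (Fin n)] (hφ : IsOrthantGauge φ)
    (hh : ∀ i, IsClassK (h i)) : IsClassK fun r => sInf (feasibleValues φ h r) :=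
  ⟨hφ.continuousOn_sInf_feasibleValues fun i => (hh i).continuousOn,
    hφ.strictMonoOn_sInf_feasibleValues hh,
    by simp [hφ.feasibleValues_zero fun i => (hh i).map_zero]⟩

lemma isClassKInf_sSup_feasibleValues (hφ : IsOrthantGauge φ)
    (hh : ∀ i, IsClassKInf (h i) ∨ h i = 0) (j : Fin n) (hj : IsClassKInf (h j)) :
    IsClassKInf fun r => sSup (feasibleValues φ h r) := by
  have : Nonempty (Fin n) := ⟨j⟩
  have hh' i : IsClassK (h i) ∨ h i = 0 := (hh i).imp_left IsClassKInf.toIsClassK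
  have hc i := continuousOn_of_isClassK_or_eq_zero (hh' i)
  have h0 i := map_zero_of_isClassK_or_eq_zero (hh' i)
  refine ⟨⟨hφ.continuousOn_sSup_feasibleValues hc,
    hφ.strictMonoOn_sSup_feasibleValues hh' j hj.toIsClassK,
    by simp [hφ.feasibleValues_zero h0]⟩, ?_⟩
  refine tendsto_atTop_mono' _ ?_
    (hj.tendsto_atTop.comp (tendsto_id.atTop_div_const (hφ.map_single_pos j)))
  filter_upwards [eventually_ge_atTop 0] with r hr
  exact le_csSup (hφ.isCompact_feasibleValues hc r).bddAbove
    (hφ.single_mem_feasibleValues h0 j hr)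

lemma isClassKInf_or_eq_zero_sSup_feasibleValues (hφ : IsOrthantGauge φ)
    (hh : ∀ i, IsClassKInf (h i) ∨ h i = 0) :
    IsClassKInf (fun r => sSup (feasibleValues φ h r)) ∨
      (fun r => sSup (feasibleValues φ h r)) = 0 := by
  by_cases hzero : ∀ i, h i = 0
  · exact Or.inr (funext fun r => sSup_feasibleValues_of_eq_zero φ hzero r)
  · obtain ⟨j, hj⟩ := not_forall.1 hzero
    exact Or.inl (hφ.isClassKInf_sSup_feasibleValues hh j ((hh j).resolve_right hj))

end IsOrthantGauge

lemma isOrthantGauge_weightedSum {n : ℕ} {μ : Fin n → ℝ} (hμ : ∀ i, 0 < μ i) :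
    IsOrthantGauge fun s : Fin n → ℝ => ∑ i, μ i * s i where
  continuous := by fun_prop
  map_smul c _ s := by
    simp only [Pi.smul_apply, smul_eq_mul, Finset.mul_sum]
    exact Finset.sum_congr rfl fun i _ => by ring
  nonneg s hs := Finset.sum_nonneg fun i _ => mul_nonneg (hμ i).le (hs i)
  exists_le_mul := by
    refine ⟨∑ k, (μ k)⁻¹, fun s hs i => ?_⟩
    have hsum : 0 ≤ ∑ k, μ k * s k := Finset.sum_nonneg fun k _ => mul_nonneg (hμ k).le (hs k)
    calc s i = (μ i)⁻¹ * (μ i * s i) := by field_simp [(hμ i).ne']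
      _ ≤ (μ i)⁻¹ * ∑ k, μ k * s k := mul_le_mul_of_nonneg_left
          (Finset.single_le_sum (fun k _ => mul_nonneg (hμ k).le (hs k)) (Finset.mem_univ i))
          (inv_nonneg.2 (hμ i).le)
      _ ≤ (∑ k, (μ k)⁻¹) * ∑ k, μ k * s k := mul_le_mul_of_nonneg_right
          (Finset.single_le_sum (fun k _ => inv_nonneg.2 (hμ k).le) (Finset.mem_univ i)) hsum

lemma isOrthantGauge_sqrt_sum_sq (n : ℕ) :
    IsOrthantGauge fun s : Fin n → ℝ => √(∑ i, s i ^ 2) where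
  continuous := by fun_prop
  map_smul c hc s := by
    simp only [Pi.smul_apply, smul_eq_mul, mul_pow, ← Finset.mul_sum]
    rw [Real.sqrt_mul (sq_nonneg c), Real.sqrt_sq hc]
  nonneg _ _ := Real.sqrt_nonneg _
  exists_le_mul := ⟨1, fun s _ i => by
    rw [one_mul]
    exact (le_abs_self _).trans <| Real.abs_le_sqrt <|
      Finset.single_le_sum (fun k _ => sq_nonneg (s k)) (Finset.mem_univ i)⟩

lemma sqrt_sum_sq_le_sSup_feasibleValues {n : ℕ} {μ : Fin n → ℝ} (hμ : ∀ i, 0 < μ i)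
    {α αinv : Fin n → ℝ → ℝ} (hα : ∀ i, IsClassKInf (α i))
    (hinv : ∀ i, InvOn (αinv i) (α i) (Ici 0) (Ici 0)) {d V : Fin n → ℝ} (hd : ∀ i, 0 ≤ d i)
    (hV : ∀ i, 0 ≤ V i) (hdV : ∀ i, α i (d i) ≤ V i) :
    √(∑ i, d i ^ 2) ≤ sSup (feasibleValues (fun s => ∑ i, μ i * s i) αinv (∑ i, μ i * V i)) :=
  calc √(∑ i, d i ^ 2) ≤ ∑ i, d i :=
        Real.sqrt_le_iff.2 ⟨Finset.sum_nonneg fun i _ => hd i,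
          Finset.sum_sq_le_sq_sum_of_nonneg fun i _ => hd i⟩
    _ ≤ ∑ i, αinv i (V i) := Finset.sum_le_sum fun i _ =>
        ((hα i).map_le_iff_le (hinv i) (hd i) (hV i)).1 (hdV i)
    _ ≤ _ := (isOrthantGauge_weightedSum hμ).sum_le_sSup
        (fun i => ((hα i).of_invOn (hinv i)).continuousOn) hV

section BlockDiagonal

variable {ι R : Type*} [Fintype ι] [DecidableEq ι] {m n : ι → Type*} [∀ i, Fintype (n i)]

lemma blockDiagonal'_mulVec_apply [NonUnitalNonAssocSemiring R] (P : ∀ i, Matrix (m i) (n i) R)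
    (v : (Σ i, n i) → R) (i : ι) (a : m i) :
    (blockDiagonal' P *ᵥ v) ⟨i, a⟩ = (P i *ᵥ fun b => v ⟨i, b⟩) a := by
  simp only [mulVec, dotProduct, Fintype.sum_sigma]
  rw [Fintype.sum_eq_single i fun j hj => Finset.sum_eq_zero fun b _ => by
    rw [blockDiagonal'_apply_ne _ _ _ (Ne.symm hj), zero_mul]]
  simp [blockDiagonal'_apply_eq]

lemma dotProduct_blockDiagonal'_mulVec [∀ i, Fintype (m i)] [NonUnitalNonAssocSemiring R]
    (P : ∀ i, Matrix (m i) (n i) R) (u : (Σ i, m i) → R) (v : (Σ i, n i) → R) :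
    u ⬝ᵥ blockDiagonal' P *ᵥ v = ∑ i, (fun a => u ⟨i, a⟩) ⬝ᵥ P i *ᵥ fun b => v ⟨i, b⟩ := by
  simp only [dotProduct, Fintype.sum_sigma, blockDiagonal'_mulVec_apply]

lemma dotProduct_fromBlocks_blockDiagonal'_mulVec [∀ i, Fintype (m i)] [CommSemiring R]
    (μ : ι → R) (A : ∀ i, Matrix (m i) (m i) R) (B : ∀ i, Matrix (m i) (n i) R)
    (C : ∀ i, Matrix (n i) (m i) R) (D : ∀ i, Matrix (n i) (n i) R)
    (a : (Σ i, m i) → R) (b : (Σ i, n i) → R) :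
    Sum.elim a b ⬝ᵥ fromBlocks (blockDiagonal' fun i => μ i • A i)
        (blockDiagonal' fun i => μ i • B i) (blockDiagonal' fun i => μ i • C i)
        (blockDiagonal' fun i => μ i • D i) *ᵥ Sum.elim a b =
      ∑ i, μ i * (Sum.elim (fun x => a ⟨i, x⟩) (fun y => b ⟨i, y⟩) ⬝ᵥ
        fromBlocks (A i) (B i) (C i) (D i) *ᵥ
          Sum.elim (fun x => a ⟨i, x⟩) (fun y => b ⟨i, y⟩)) := by
  simp only [fromBlocks_mulVec, sumElim_dotProduct_sumElim, dotProduct_add,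
    dotProduct_blockDiagonal'_mulVec, smul_mulVec, dotProduct_smul, smul_eq_mul,
    Sum.elim_comp_inl, Sum.elim_comp_inr, Finset.sum_add_distrib, mul_add]

end BlockDiagonal

lemma sum_supplyRate_nonpos {ι : Type*} [Fintype ι] [DecidableEq ι] {p ph q qh r : ι → Type*}
    [∀ i, Fintype (p i)] [∀ i, Fintype (ph i)] [∀ i, Fintype (q i)] [∀ i, DecidableEq (q i)]
    [∀ i, Fintype (qh i)] [∀ i, Fintype (r i)]
    (G : ∀ i, Matrix (r i) (p i) ℝ) (Gh : ∀ i, Matrix (r i) (ph i) ℝ)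
    (H : ∀ i, Matrix (q i) (qh i) ℝ) (X11 : ∀ i, Matrix (r i) (r i) ℝ)
    (X12 : ∀ i, Matrix (r i) (q i) ℝ) (X21 : ∀ i, Matrix (q i) (r i) ℝ)
    (X22 : ∀ i, Matrix (q i) (q i) ℝ) (M : Matrix (Σ i, p i) (Σ i, q i) ℝ)
    (Mh : Matrix (Σ i, ph i) (Σ i, qh i) ℝ) (μ : ι → ℝ)
    (hLMI : ∀ z : (Σ i, q i) → ℝ,
      z ⬝ᵥ ((fromRows (blockDiagonal' G * M) (1 : Matrix (Σ i, q i) (Σ i, q i) ℝ))ᵀ *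
          fromBlocks (blockDiagonal' fun i => μ i • X11 i) (blockDiagonal' fun i => μ i • X12 i)
            (blockDiagonal' fun i => μ i • X21 i) (blockDiagonal' fun i => μ i • X22 i) *
          fromRows (blockDiagonal' G * M) (1 : Matrix (Σ i, q i) (Σ i, q i) ℝ)) *ᵥ z ≤ 0)
    (hGMH : blockDiagonal' G * M * blockDiagonal' H = blockDiagonal' Gh * Mh)
    (y : (Σ i, q i) → ℝ) (yh : (Σ i, qh i) → ℝ) :
    ∑ i, μ i *
      (Sum.elim (G i *ᵥ (fun a => (M *ᵥ y) ⟨i, a⟩) - Gh i *ᵥ (fun a => (Mh *ᵥ yh) ⟨i, a⟩))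
          ((fun c => y ⟨i, c⟩) - H i *ᵥ (fun c => yh ⟨i, c⟩)) ⬝ᵥ
        fromBlocks (X11 i) (X12 i) (X21 i) (X22 i) *ᵥ
          Sum.elim (G i *ᵥ (fun a => (M *ᵥ y) ⟨i, a⟩) - Gh i *ᵥ (fun a => (Mh *ᵥ yh) ⟨i, a⟩))
            ((fun c => y ⟨i, c⟩) - H i *ᵥ (fun c => yh ⟨i, c⟩))) ≤ 0 := by
  set z := y - blockDiagonal' H *ᵥ yh
  -- `GMH = ĜM̂` turns the mismatch of the internal inputs into `GM` applied to `z`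
  have hvec : (blockDiagonal' G * M) *ᵥ z =
      blockDiagonal' G *ᵥ (M *ᵥ y) - blockDiagonal' Gh *ᵥ (Mh *ᵥ yh) := by
    simp only [z, mulVec_sub, mulVec_mulVec, hGMH]
  have hw i : G i *ᵥ (fun a => (M *ᵥ y) ⟨i, a⟩) - Gh i *ᵥ (fun a => (Mh *ᵥ yh) ⟨i, a⟩) =
      fun a => ((blockDiagonal' G * M) *ᵥ z) ⟨i, a⟩ := by
    funext a
    rw [hvec, Pi.sub_apply, Pi.sub_apply, blockDiagonal'_mulVec_apply,
      blockDiagonal'_mulVec_apply]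
  have hy i : (fun c => y ⟨i, c⟩) - H i *ᵥ (fun c => yh ⟨i, c⟩) = fun c => z ⟨i, c⟩ := by
    funext c
    simp [z, blockDiagonal'_mulVec_apply]
  have hR : fromRows (blockDiagonal' G * M) (1 : Matrix (Σ i, q i) (Σ i, q i) ℝ) *ᵥ z =
      Sum.elim ((blockDiagonal' G * M) *ᵥ z) z := by
    rw [fromRows_mulVec, one_mulVec]
  have hquad := hLMI z
  rw [← mulVec_mulVec, ← mulVec_mulVec, dotProduct_mulVec, vecMul_transpose, hR,
    dotProduct_fromBlocks_blockDiagonal'_mulVec] at hquad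
  simpa only [hw, hy] using hquad

lemma sum_mul_sub_sum_mul_le {ι : Type*} [Fintype ι] {μ E V k q ρ ψ : ι → ℝ} {K R : ℝ}
    (hμ : ∀ i, 0 ≤ μ i) (hq : ∑ i, μ i * q i ≤ 0) (hK : K ≤ ∑ i, μ i * k i)
    (hR : ∑ i, μ i * ρ i ≤ R) (h : ∀ i, E i - V i ≤ -k i + q i + ρ i + ψ i) :
    ∑ i, μ i * E i - ∑ i, μ i * V i ≤ -K + R + ∑ i, μ i * ψ i := by
  have hsum := Finset.sum_le_sum fun i (_ : i ∈ Finset.univ) =>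
    mul_le_mul_of_nonneg_left (h i) (hμ i)
  simp only [mul_add, mul_sub, mul_neg, Finset.sum_add_distrib, Finset.sum_sub_distrib,
    Finset.sum_neg_distrib] at hsum
  linarith

theorem stmt_5_general
    (N : ℕ) (hN : 1 ≤ N)
    -- dimensions of internal inputs/outputs and abstract external inputs:
    (p ph q1 q2 qh2 mh r : Fin N → ℕ)
    -- state, external-input and noise spaces of the subsystems and their abstractions:
    (X : Fin N → Type)
    (Xh : Fin N → Type)
    (U : Fin N → Type)
    (Vn : Fin N → Type) [∀ i, MeasurableSpace (Vn i)]
    (Vnh : Fin N → Type) [∀ i, MeasurableSpace (Vnh i)]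
    (μn : ∀ i, Measure (Vn i))
    (μnh : ∀ i, Measure (Vnh i))
    -- transition maps (state, external input, internal input, noise):
    (f : ∀ i, X i → U i → (Fin (p i) → ℝ) → Vn i → X i)
    (fh : ∀ i, Xh i → EuclideanSpace ℝ (Fin (mh i)) → (Fin (ph i) → ℝ) → Vnh i → Xh i)
    -- external and internal output maps:
    (h1 : ∀ i, X i → EuclideanSpace ℝ (Fin (q1 i))) (h2 : ∀ i, X i → Fin (q2 i) → ℝ)
    (hh1 : ∀ i, Xh i → EuclideanSpace ℝ (Fin (q1 i))) (hh2 : ∀ i, Xh i → Fin (qh2 i) → ℝ)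
    -- the stochastic storage functions and their data:
    (Vi : ∀ i, X i → Xh i → ℝ)
    (hVinonneg : ∀ i xi xhi, 0 ≤ Vi i xi xhi)
    (α κ ρ : Fin N → ℝ → ℝ) (ψ : Fin N → ℝ)
    -- `α_i ∈ K∞` together with its inverse `αinv i` on `[0,∞)`:
    (hα_cont : ∀ i, ContinuousOn (α i) (Ici 0)) (hα_mono : ∀ i, StrictMonoOn (α i) (Ici 0))
    (hα_zero : ∀ i, α i 0 = 0) (hα_top : ∀ i, Tendsto (α i) atTop atTop)
    (αinv : Fin N → ℝ → ℝ)
    (hαinv : ∀ i, ∀ t ∈ Ici (0 : ℝ), αinv i (α i t) = t ∧ α i (αinv i t) = t)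
    -- `κ_i ∈ K`:
    (hκ_cont : ∀ i, ContinuousOn (κ i) (Ici 0)) (hκ_mono : ∀ i, StrictMonoOn (κ i) (Ici 0))
    (hκ_zero : ∀ i, κ i 0 = 0)
    -- `ρ_i ∈ K∞ ∪ {0}`:
    (hρ : ∀ i, (ContinuousOn (ρ i) (Ici 0) ∧ StrictMonoOn (ρ i) (Ici 0) ∧ ρ i 0 = 0 ∧
            Tendsto (ρ i) atTop atTop) ∨ ρ i = fun _ => 0)
    -- matrices of the storage functions:
    (G : ∀ i, Matrix (Fin (r i)) (Fin (p i)) ℝ)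
    (Gh : ∀ i, Matrix (Fin (r i)) (Fin (ph i)) ℝ)
    (H : ∀ i, Matrix (Fin (q2 i)) (Fin (qh2 i)) ℝ)
    (X11 : ∀ i, Matrix (Fin (r i)) (Fin (r i)) ℝ)
    (X12 : ∀ i, Matrix (Fin (r i)) (Fin (q2 i)) ℝ)
    (X21 : ∀ i, Matrix (Fin (q2 i)) (Fin (r i)) ℝ)
    (X22 : ∀ i, Matrix (Fin (q2 i)) (Fin (q2 i)) ℝ)
    -- SStF condition (i):
    (hSStF1 : ∀ i xi xhi, α i ‖h1 i xi - hh1 i xhi‖ ≤ Vi i xi xhi)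
    -- SStF condition (ii):
    (hSStF2 : ∀ i (xi : X i) (xhi : Xh i) (νhi : EuclideanSpace ℝ (Fin (mh i))),
      ∃ νi : U i, ∀ (wi : Fin (p i) → ℝ) (whi : Fin (ph i) → ℝ),
        (∫ v, ∫ vh, Vi i (f i xi νi wi v) (fh i xhi νhi whi vh) ∂μnh i ∂μn i) -
            Vi i xi xhi ≤
          -κ i (Vi i xi xhi) +
            (Sum.elim ((G i).mulVec wi - (Gh i).mulVec whi)
                (h2 i xi - (H i).mulVec (hh2 i xhi)) ⬝ᵥ
              (fromBlocks (X11 i) (X12 i) (X21 i) (X22 i)).mulVec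
                (Sum.elim ((G i).mulVec wi - (Gh i).mulVec whi)
                  (h2 i xi - (H i).mulVec (hh2 i xhi)))) +
            ρ i ‖νhi‖ + ψ i)
    -- the coupling matrices of the two interconnections:
    (M : Matrix ((i : Fin N) × Fin (p i)) ((i : Fin N) × Fin (q2 i)) ℝ)
    (Mh : Matrix ((i : Fin N) × Fin (ph i)) ((i : Fin N) × Fin (qh2 i)) ℝ)
    -- weights `μ_i > 0`:
    (μw : Fin N → ℝ) (hμw : ∀ i, 0 < μw i)
    -- compositionality condition (5): `[GM; I_{q̃}]ᵀ X_cmp [GM; I_{q̃}] ⪯ 0`: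
    (hLMI : ∀ z : ((i : Fin N) × Fin (q2 i)) → ℝ,
      z ⬝ᵥ ((fromRows (blockDiagonal' G * M)
              (1 : Matrix ((i : Fin N) × Fin (q2 i)) ((i : Fin N) × Fin (q2 i)) ℝ))ᵀ *
            (fromBlocks
              (blockDiagonal' fun i => μw i • X11 i) (blockDiagonal' fun i => μw i • X12 i)
              (blockDiagonal' fun i => μw i • X21 i) (blockDiagonal' fun i => μw i • X22 i)) *
            fromRows (blockDiagonal' G * M)
              (1 : Matrix ((i : Fin N) × Fin (q2 i)) ((i : Fin N) × Fin (q2 i)) ℝ)).mulVec z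
        ≤ 0)
    -- compositionality condition (6): `GMH = ĜM̂`:
    (hGMH : blockDiagonal' G * M * blockDiagonal' H = blockDiagonal' Gh * Mh) :
    -- conclusion (a): `V` satisfies `α(‖h(x) − ĥ(x̂)‖) ≤ V(x,x̂)` with `α = ᾱ⁻¹`, `ᾱ ∈ K∞`:
    (∃ αbar αfun : ℝ → ℝ,
      (∀ rr : ℝ, αbar rr = sSup {t : ℝ | ∃ s : Fin N → ℝ, (∀ i, 0 ≤ s i) ∧
        (∑ i, μw i * s i) = rr ∧ t = ∑ i, αinv i (s i)}) ∧
      (∀ rr : ℝ, 0 ≤ rr → ∃ s : Fin N → ℝ, (∀ i, 0 ≤ s i) ∧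
        (∑ i, μw i * s i) = rr ∧ (∑ i, αinv i (s i)) = αbar rr) ∧
      ContinuousOn αbar (Ici 0) ∧ StrictMonoOn αbar (Ici 0) ∧ αbar 0 = 0 ∧
      Tendsto αbar atTop atTop ∧
      (∀ t ∈ Ici (0 : ℝ), αfun (αbar t) = t ∧ αbar (αfun t) = t) ∧
      (∀ (x : ∀ i, X i) (xh : ∀ i, Xh i),
        αfun (Real.sqrt (∑ i, ‖h1 i (x i) - hh1 i (xh i)‖ ^ 2)) ≤
          ∑ i, μw i * Vi i (x i) (xh i))) ∧
    -- conclusion (b): the expected-decrease condition of a stochastic simulation function: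
    (∃ κc ρc : ℝ → ℝ,
      (∀ rr : ℝ, κc rr = sInf {t : ℝ | ∃ s : Fin N → ℝ, (∀ i, 0 ≤ s i) ∧
        (∑ i, μw i * s i) = rr ∧ t = ∑ i, μw i * κ i (s i)}) ∧
      (∀ rr : ℝ, 0 ≤ rr → ∃ s : Fin N → ℝ, (∀ i, 0 ≤ s i) ∧
        (∑ i, μw i * s i) = rr ∧ (∑ i, μw i * κ i (s i)) = κc rr) ∧
      ContinuousOn κc (Ici 0) ∧ StrictMonoOn κc (Ici 0) ∧ κc 0 = 0 ∧
      (∀ rr : ℝ, ρc rr = sSup {t : ℝ | ∃ s : Fin N → ℝ, (∀ i, 0 ≤ s i) ∧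
        Real.sqrt (∑ i, s i ^ 2) = rr ∧ t = ∑ i, μw i * ρ i (s i)}) ∧
      (∀ rr : ℝ, 0 ≤ rr → ∃ s : Fin N → ℝ, (∀ i, 0 ≤ s i) ∧
        Real.sqrt (∑ i, s i ^ 2) = rr ∧ (∑ i, μw i * ρ i (s i)) = ρc rr) ∧
      ((ContinuousOn ρc (Ici 0) ∧ StrictMonoOn ρc (Ici 0) ∧ ρc 0 = 0 ∧
          Tendsto ρc atTop atTop) ∨ ρc = fun _ => 0) ∧
      (∀ (x : ∀ i, X i) (xh : ∀ i, Xh i)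
          (νh : ∀ i, EuclideanSpace ℝ (Fin (mh i))),
        ∃ ν : ∀ i, U i,
          (∑ i, μw i *
              ∫ v, ∫ vh,
                Vi i
                  (f i (x i) (ν i)
                    (fun a =>
                      M.mulVec (fun jc => h2 jc.1 (x jc.1) jc.2) ⟨i, a⟩) v)
                  (fh i (xh i) (νh i)
                    (fun a =>
                      Mh.mulVec (fun jc => hh2 jc.1 (xh jc.1) jc.2) ⟨i, a⟩) vh)
                ∂μnh i ∂μn i) -
            (∑ i, μw i * Vi i (x i) (xh i)) ≤
          -κc (∑ i, μw i * Vi i (x i) (xh i)) +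
            ρc (Real.sqrt (∑ i, ‖νh i‖ ^ 2)) + ∑ i, μw i * ψ i)) := by
  have : Nonempty (Fin N) := ⟨⟨0, hN⟩⟩
  have hsum := isOrthantGauge_weightedSum hμw
  have hnorm := isOrthantGauge_sqrt_sum_sq N
  have hα i : IsClassKInf (α i) := ⟨⟨hα_cont i, hα_mono i, hα_zero i⟩, hα_top i⟩
  have hαinv' i : InvOn (αinv i) (α i) (Ici 0) (Ici 0) :=
    ⟨fun t ht => (hαinv i t ht).1, fun t ht => (hαinv i t ht).2⟩
  have hβ i := (hα i).of_invOn (hαinv' i)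
  have hκμ i : IsClassK fun t => μw i * κ i t :=
    IsClassK.const_mul ⟨hκ_cont i, hκ_mono i, hκ_zero i⟩ (hμw i)
  have hρμ i : IsClassKInf (fun t => μw i * ρ i t) ∨ (fun t => μw i * ρ i t) = 0 :=
    (hρ i).imp (fun ⟨hc, hm, h0, ht⟩ => IsClassKInf.const_mul ⟨⟨hc, hm, h0⟩, ht⟩ (hμw i))
      fun h0 => funext fun t => by simp [h0]
  have hρK i := (hρμ i).imp_left IsClassKInf.toIsClassK
  have hρc i := continuousOn_of_isClassK_or_eq_zero (hρK i)
  have hαbar := hsum.isClassKInf_sSup_feasibleValues (fun i => Or.inl (hβ i)) ⟨0, hN⟩ (hβ _)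
  obtain ⟨αfun, hαfun⟩ := hαbar.exists_invOn
  have hκc := hsum.isClassK_sInf_feasibleValues hκμ
  refine ⟨⟨_, αfun, fun _ => rfl,
    fun _ => hsum.exists_sum_eq_sSup (fun i => (hβ i).continuousOn) fun i => (hβ i).map_zero,
    hαbar.continuousOn, hαbar.strictMonoOn, hαbar.map_zero, hαbar.tendsto_atTop,
    fun t ht => ⟨hαfun.1 ht, hαfun.2 ht⟩, fun x xh => ?_⟩,
    ⟨_, _, fun _ => rfl,
    fun _ => hsum.exists_sum_eq_sInf (fun i => (hκμ i).continuousOn) fun i => (hκμ i).map_zero,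
    hκc.continuousOn, hκc.strictMonoOn, hκc.map_zero, fun _ => rfl,
    fun _ => hnorm.exists_sum_eq_sSup hρc fun i => map_zero_of_isClassK_or_eq_zero (hρK i),
    (hnorm.isClassKInf_or_eq_zero_sSup_feasibleValues hρμ).imp_left
      fun h => ⟨h.continuousOn, h.strictMonoOn, h.map_zero, h.tendsto_atTop⟩,
    fun x xh νh => ?_⟩⟩
  · rw [(hαbar.of_invOn hαfun).map_le_iff_le hαfun.symm (Real.sqrt_nonneg _)
      (Finset.sum_nonneg fun i _ => mul_nonneg (hμw i).le (hVinonneg i _ _))]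
    exact sqrt_sum_sq_le_sSup_feasibleValues hμw hα hαinv' (fun i => norm_nonneg _)
      (fun i => hVinonneg i _ _) fun i => hSStF1 i _ _
  · choose ν hν using fun i => hSStF2 i (x i) (xh i) (νh i)
    exact ⟨ν, sum_mul_sub_sum_mul_le (fun i => (hμw i).le)
      (sum_supplyRate_nonpos G Gh H X11 X12 X21 X22 M Mh μw hLMI hGMH _ _)
      (hsum.sInf_le_sum (fun i => (hκμ i).continuousOn) fun i => hVinonneg i _ _)
      (hnorm.sum_le_sSup hρc fun i => norm_nonneg (νh i)) fun i => hν i _ _⟩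

/-- compositional construction of a stochastic simulation function.
If each `Vi i` is a stochastic storage function from the abstraction `Σ̂_i` to the subsystem
`Σ_i` with data `(α_i, κ_i, ρ_i, ψ_i, G_i, Ĝ_i, H_i, X̄_i)` and the dissipativity LMI
`[GM; I]ᵀ X_cmp [GM; I] ⪯ 0` together with `GMH = ĜM̂` hold, then
`V(x,x̂) = Σ_i μ_i V_i(x_i, x̂_i)` is a stochastic simulation function from the abstract
interconnection (with coupling `M̂`) to the concrete interconnection (with coupling `M`):
(a) `α(‖h(x) − ĥ(x̂)‖) ≤ V(x,x̂)` with `α = ᾱ⁻¹`, where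
`ᾱ(r) = max{Σ_i α_i⁻¹(s_i) : s_i ≥ 0, Σ_i μ_i s_i = r}` is a class-`K∞` function, and
(b) the expected-decrease condition with
`κ(r) = min{Σ_i μ_i κ_i(s_i) : s_i ≥ 0, Σ_i μ_i s_i = r}` of class `K`,
`ρ_ext(r) = max{Σ_i μ_i ρ_i(s_i) : s_i ≥ 0, ‖(s_1,…,s_N)‖ = r}` of class `K∞ ∪ {0}`, and
`ψ = Σ_i μ_i ψ_i`. Stacked external-output/input norms are written as
`√(Σ_i ‖·_i‖²)`, which is the Euclidean norm of the concatenated vector. -/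
theorem stmt_5
    (N : ℕ) (hN : 1 ≤ N)
    -- dimensions of internal inputs/outputs and abstract external inputs:
    (p ph q1 q2 qh2 mh r : Fin N → ℕ)
    -- state, external-input and noise spaces of the subsystems and their abstractions:
    (X : Fin N → Type) [∀ i, MeasurableSpace (X i)]
    (Xh : Fin N → Type) [∀ i, MeasurableSpace (Xh i)]
    (U : Fin N → Type)
    (Vn : Fin N → Type) [∀ i, MeasurableSpace (Vn i)]
    (Vnh : Fin N → Type) [∀ i, MeasurableSpace (Vnh i)]
    (μn : ∀ i, Measure (Vn i)) [∀ i, IsProbabilityMeasure (μn i)]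
    (μnh : ∀ i, Measure (Vnh i)) [∀ i, IsProbabilityMeasure (μnh i)]
    -- transition maps (state, external input, internal input, noise):
    (f : ∀ i, X i → U i → (Fin (p i) → ℝ) → Vn i → X i)
    (fh : ∀ i, Xh i → EuclideanSpace ℝ (Fin (mh i)) → (Fin (ph i) → ℝ) → Vnh i → Xh i)
    -- external and internal output maps:
    (h1 : ∀ i, X i → EuclideanSpace ℝ (Fin (q1 i))) (h2 : ∀ i, X i → Fin (q2 i) → ℝ)
    (hh1 : ∀ i, Xh i → EuclideanSpace ℝ (Fin (q1 i))) (hh2 : ∀ i, Xh i → Fin (qh2 i) → ℝ)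
    -- the stochastic storage functions and their data:
    (Vi : ∀ i, X i → Xh i → ℝ)
    (hVimeas : ∀ i, Measurable fun pr : X i × Xh i => Vi i pr.1 pr.2)
    (hVinonneg : ∀ i xi xhi, 0 ≤ Vi i xi xhi)
    (α κ ρ : Fin N → ℝ → ℝ) (ψ : Fin N → ℝ) (hψ : ∀ i, 0 ≤ ψ i)
    -- `α_i ∈ K∞` together with its inverse `αinv i` on `[0,∞)`:
    (hα_cont : ∀ i, ContinuousOn (α i) (Ici 0)) (hα_mono : ∀ i, StrictMonoOn (α i) (Ici 0))
    (hα_zero : ∀ i, α i 0 = 0) (hα_top : ∀ i, Tendsto (α i) atTop atTop)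
    (αinv : Fin N → ℝ → ℝ)
    (hαinv : ∀ i, ∀ t ∈ Ici (0 : ℝ), αinv i (α i t) = t ∧ α i (αinv i t) = t)
    -- `κ_i ∈ K`:
    (hκ_cont : ∀ i, ContinuousOn (κ i) (Ici 0)) (hκ_mono : ∀ i, StrictMonoOn (κ i) (Ici 0))
    (hκ_zero : ∀ i, κ i 0 = 0)
    -- `ρ_i ∈ K∞ ∪ {0}`:
    (hρ : ∀ i, (ContinuousOn (ρ i) (Ici 0) ∧ StrictMonoOn (ρ i) (Ici 0) ∧ ρ i 0 = 0 ∧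
            Tendsto (ρ i) atTop atTop) ∨ ρ i = fun _ => 0)
    -- matrices of the storage functions:
    (G : ∀ i, Matrix (Fin (r i)) (Fin (p i)) ℝ)
    (Gh : ∀ i, Matrix (Fin (r i)) (Fin (ph i)) ℝ)
    (H : ∀ i, Matrix (Fin (q2 i)) (Fin (qh2 i)) ℝ)
    (X11 : ∀ i, Matrix (Fin (r i)) (Fin (r i)) ℝ)
    (X12 : ∀ i, Matrix (Fin (r i)) (Fin (q2 i)) ℝ)
    (X21 : ∀ i, Matrix (Fin (q2 i)) (Fin (r i)) ℝ)
    (X22 : ∀ i, Matrix (Fin (q2 i)) (Fin (q2 i)) ℝ)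
    (hXsymm : ∀ i, (fromBlocks (X11 i) (X12 i) (X21 i) (X22 i)).IsSymm)
    -- SStF condition (i):
    (hSStF1 : ∀ i xi xhi, α i ‖h1 i xi - hh1 i xhi‖ ≤ Vi i xi xhi)
    -- SStF condition (ii):
    (hSStF2 : ∀ i (xi : X i) (xhi : Xh i) (νhi : EuclideanSpace ℝ (Fin (mh i))),
      ∃ νi : U i, ∀ (wi : Fin (p i) → ℝ) (whi : Fin (ph i) → ℝ),
        (∫ v, ∫ vh, Vi i (f i xi νi wi v) (fh i xhi νhi whi vh) ∂μnh i ∂μn i) -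
            Vi i xi xhi ≤
          -κ i (Vi i xi xhi) +
            (Sum.elim ((G i).mulVec wi - (Gh i).mulVec whi)
                (h2 i xi - (H i).mulVec (hh2 i xhi)) ⬝ᵥ
              (fromBlocks (X11 i) (X12 i) (X21 i) (X22 i)).mulVec
                (Sum.elim ((G i).mulVec wi - (Gh i).mulVec whi)
                  (h2 i xi - (H i).mulVec (hh2 i xhi)))) +
            ρ i ‖νhi‖ + ψ i)
    -- the coupling matrices of the two interconnections:
    (M : Matrix ((i : Fin N) × Fin (p i)) ((i : Fin N) × Fin (q2 i)) ℝ)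
    (Mh : Matrix ((i : Fin N) × Fin (ph i)) ((i : Fin N) × Fin (qh2 i)) ℝ)
    -- weights `μ_i > 0`:
    (μw : Fin N → ℝ) (hμw : ∀ i, 0 < μw i)
    -- compositionality condition (5): `[GM; I_{q̃}]ᵀ X_cmp [GM; I_{q̃}] ⪯ 0`:
    (hLMI : ∀ z : ((i : Fin N) × Fin (q2 i)) → ℝ,
      z ⬝ᵥ ((fromRows (blockDiagonal' G * M)
              (1 : Matrix ((i : Fin N) × Fin (q2 i)) ((i : Fin N) × Fin (q2 i)) ℝ))ᵀ *
            (fromBlocks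
              (blockDiagonal' fun i => μw i • X11 i) (blockDiagonal' fun i => μw i • X12 i)
              (blockDiagonal' fun i => μw i • X21 i) (blockDiagonal' fun i => μw i • X22 i)) *
            fromRows (blockDiagonal' G * M)
              (1 : Matrix ((i : Fin N) × Fin (q2 i)) ((i : Fin N) × Fin (q2 i)) ℝ)).mulVec z
        ≤ 0)
    -- compositionality condition (6): `GMH = ĜM̂`:
    (hGMH : blockDiagonal' G * M * blockDiagonal' H = blockDiagonal' Gh * Mh) :
    -- conclusion (a): `V` satisfies `α(‖h(x) − ĥ(x̂)‖) ≤ V(x,x̂)` with `α = ᾱ⁻¹`, `ᾱ ∈ K∞`: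
    (∃ αbar αfun : ℝ → ℝ,
      (∀ rr : ℝ, αbar rr = sSup {t : ℝ | ∃ s : Fin N → ℝ, (∀ i, 0 ≤ s i) ∧
        (∑ i, μw i * s i) = rr ∧ t = ∑ i, αinv i (s i)}) ∧
      (∀ rr : ℝ, 0 ≤ rr → ∃ s : Fin N → ℝ, (∀ i, 0 ≤ s i) ∧
        (∑ i, μw i * s i) = rr ∧ (∑ i, αinv i (s i)) = αbar rr) ∧
      ContinuousOn αbar (Ici 0) ∧ StrictMonoOn αbar (Ici 0) ∧ αbar 0 = 0 ∧
      Tendsto αbar atTop atTop ∧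
      (∀ t ∈ Ici (0 : ℝ), αfun (αbar t) = t ∧ αbar (αfun t) = t) ∧
      (∀ (x : ∀ i, X i) (xh : ∀ i, Xh i),
        αfun (Real.sqrt (∑ i, ‖h1 i (x i) - hh1 i (xh i)‖ ^ 2)) ≤
          ∑ i, μw i * Vi i (x i) (xh i))) ∧
    -- conclusion (b): the expected-decrease condition of a stochastic simulation function:
    (∃ κc ρc : ℝ → ℝ,
      (∀ rr : ℝ, κc rr = sInf {t : ℝ | ∃ s : Fin N → ℝ, (∀ i, 0 ≤ s i) ∧
        (∑ i, μw i * s i) = rr ∧ t = ∑ i, μw i * κ i (s i)}) ∧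
      (∀ rr : ℝ, 0 ≤ rr → ∃ s : Fin N → ℝ, (∀ i, 0 ≤ s i) ∧
        (∑ i, μw i * s i) = rr ∧ (∑ i, μw i * κ i (s i)) = κc rr) ∧
      ContinuousOn κc (Ici 0) ∧ StrictMonoOn κc (Ici 0) ∧ κc 0 = 0 ∧
      (∀ rr : ℝ, ρc rr = sSup {t : ℝ | ∃ s : Fin N → ℝ, (∀ i, 0 ≤ s i) ∧
        Real.sqrt (∑ i, s i ^ 2) = rr ∧ t = ∑ i, μw i * ρ i (s i)}) ∧
      (∀ rr : ℝ, 0 ≤ rr → ∃ s : Fin N → ℝ, (∀ i, 0 ≤ s i) ∧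
        Real.sqrt (∑ i, s i ^ 2) = rr ∧ (∑ i, μw i * ρ i (s i)) = ρc rr) ∧
      ((ContinuousOn ρc (Ici 0) ∧ StrictMonoOn ρc (Ici 0) ∧ ρc 0 = 0 ∧
          Tendsto ρc atTop atTop) ∨ ρc = fun _ => 0) ∧
      (∀ (x : ∀ i, X i) (xh : ∀ i, Xh i)
          (νh : ∀ i, EuclideanSpace ℝ (Fin (mh i))),
        ∃ ν : ∀ i, U i,
          (∑ i, μw i *
              ∫ v, ∫ vh,
                Vi i
                  (f i (x i) (ν i)
                    (fun a =>
                      M.mulVec (fun jc => h2 jc.1 (x jc.1) jc.2) ⟨i, a⟩) v)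
                  (fh i (xh i) (νh i)
                    (fun a =>
                      Mh.mulVec (fun jc => hh2 jc.1 (xh jc.1) jc.2) ⟨i, a⟩) vh)
                ∂μnh i ∂μn i) -
            (∑ i, μw i * Vi i (x i) (xh i)) ≤
          -κc (∑ i, μw i * Vi i (x i) (xh i)) +
            ρc (Real.sqrt (∑ i, ‖νh i‖ ^ 2)) + ∑ i, μw i * ψ i)) :=
  stmt_5_general N hN p ph q1 q2 qh2 mh r X Xh U Vn Vnh μn μnh f fh h1 h2 hh1 hh2 Vi hVinonneg α κ ρ
    ψ hα_cont hα_mono hα_zero hα_top αinv hαinv hκ_cont hκ_mono hκ_zero hρ G Gh H X11 X12 X21 X22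
    hSStF1 hSStF2 M Mh μw hμw hLMI hGMH
end

section
/- Let N ≥ 1, let γ_1, …, γ_N be class-K∞ functions, and let μ_1, …, μ_N > 0. For r ≥ 0 define ᾱ(r) := sup{ Σ_{i=1}^N γ_i(s_i) : s_1,…,s_N ≥ 0 and Σ_{i=1}^N μ_i s_i = r }. Then for every r ≥ 0 the supremum is attained (i.e., it is a maximum), and the function ᾱ : [0,∞) → [0,∞) is a class-K∞ function. -/
open Set Filter

lemma stmt6_aux (N : ℕ) (hN : 1 ≤ N) (γ : Fin N → ℝ → ℝ)
    (hγ_cont : ∀ i, ContinuousOn (γ i) (Ici 0))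
    (μ : Fin N → ℝ) (hμ : ∀ i, 0 < μ i)
    (r : ℝ) (hr : 0 ≤ r) :
    ∃ s : Fin N → ℝ, (∀ i, 0 ≤ s i) ∧ (∑ i, μ i * s i) = r ∧
      IsGreatest {t : ℝ | ∃ s : Fin N → ℝ,
        (∀ i, 0 ≤ s i) ∧ (∑ i, μ i * s i) = r ∧ t = ∑ i, γ i (s i)}
        (∑ i, γ i (s i)) := by
  have i0 : Fin N := ⟨0, hN⟩
  set K : Set (Fin N → ℝ) := {s | (∀ i, 0 ≤ s i) ∧ ∑ i, μ i * s i = r} with hK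
  have hKne : K.Nonempty := by
    refine ⟨fun i => if i = i0 then r / μ i0 else 0, fun i => ?_, ?_⟩
    · dsimp only; split
      · exact div_nonneg hr (hμ i0).le
      · exact le_refl 0
    · dsimp only
      have : ∀ i : Fin N, μ i * (if i = i0 then r / μ i0 else 0)
          = if i = i0 then μ i0 * (r / μ i0) else 0 := by
        intro i; split <;> simp_all
      simp only [this, Finset.sum_ite_eq' Finset.univ i0, Finset.mem_univ, if_true]
      rw [mul_div_cancel₀ _ (hμ i0).ne']
  have hKcl : IsClosed K := by
    have : K = (⋂ i, (fun s : Fin N → ℝ => s i) ⁻¹' Ici 0)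
        ∩ ((fun s : Fin N → ℝ => ∑ i, μ i * s i) ⁻¹' {r}) := by
      ext s; simp [hK, forall_and]
    rw [this]
    exact (isClosed_iInter fun i => isClosed_Ici.preimage (continuous_apply i)).inter
      (isClosed_singleton.preimage (by continuity))
  have hKb : K ⊆ Icc 0 (fun i => r / μ i) := by
    intro s hs
    constructor
    · intro i; exact hs.1 i
    · intro i
      rw [le_div_iff₀ (hμ i), mul_comm]
      calc μ i * s i ≤ ∑ j, μ j * s j :=
            Finset.single_le_sum (fun j _ => mul_nonneg (hμ j).le (hs.1 j)) (Finset.mem_univ i)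
        _ = r := hs.2
  have hKc : IsCompact K := isCompact_Icc.of_isClosed_subset hKcl hKb
  have hf : ContinuousOn (fun s : Fin N → ℝ => ∑ i, γ i (s i)) K := by
    apply continuousOn_finset_sum
    intro i _
    exact (hγ_cont i).comp (continuous_apply i).continuousOn (fun s hs => hs.1 i)
  obtain ⟨s, hsK, hmax⟩ := hKc.exists_isMaxOn hKne hf
  refine ⟨s, hsK.1, hsK.2, ⟨⟨s, hsK.1, hsK.2, rfl⟩, ?_⟩⟩
  rintro t ⟨u, hu1, hu2, rfl⟩
  exact hmax (⟨hu1, hu2⟩ : u ∈ K)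

set_option maxHeartbeats 2000000 in
/-- given class-`K∞` functions `γ_1, …, γ_N` and weights `μ_i > 0`, the function
`ᾱ(r) := sup{ Σ_i γ_i(s_i) : s_i ≥ 0, Σ_i μ_i s_i = r }` attains its supremum for every
`r ≥ 0` and is itself a class-`K∞` function. -/
theorem stmt_6
    (N : ℕ) (hN : 1 ≤ N)
    (γ : Fin N → ℝ → ℝ)
    (hγ_cont : ∀ i, ContinuousOn (γ i) (Ici 0))
    (hγ_mono : ∀ i, StrictMonoOn (γ i) (Ici 0))
    (hγ_zero : ∀ i, γ i 0 = 0)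
    (hγ_top : ∀ i, Tendsto (γ i) atTop atTop)
    (μ : Fin N → ℝ) (hμ : ∀ i, 0 < μ i)
    (ᾱ : ℝ → ℝ)
    (hᾱ : ∀ r, ᾱ r = sSup {t : ℝ | ∃ s : Fin N → ℝ,
      (∀ i, 0 ≤ s i) ∧ (∑ i, μ i * s i) = r ∧ t = ∑ i, γ i (s i)}) :
    (∀ r : ℝ, 0 ≤ r → ∃ s : Fin N → ℝ,
        (∀ i, 0 ≤ s i) ∧ (∑ i, μ i * s i) = r ∧ (∑ i, γ i (s i)) = ᾱ r) ∧
    (∀ r : ℝ, 0 ≤ r → 0 ≤ ᾱ r) ∧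
    ContinuousOn ᾱ (Ici 0) ∧ StrictMonoOn ᾱ (Ici 0) ∧ ᾱ 0 = 0 ∧
    Tendsto ᾱ atTop atTop := by
  have i0 : Fin N := ⟨0, hN⟩
  -- the supremum is a greatest element
  have hg : ∀ r : ℝ, 0 ≤ r → IsGreatest {t : ℝ | ∃ s : Fin N → ℝ,
      (∀ i, 0 ≤ s i) ∧ (∑ i, μ i * s i) = r ∧ t = ∑ i, γ i (s i)} (ᾱ r) := by
    intro r hr
    obtain ⟨s, h1, h2, hG⟩ := stmt6_aux N hN γ hγ_cont μ hμ r hr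
    have he : ᾱ r = ∑ i, γ i (s i) := by rw [hᾱ r, hG.csSup_eq]
    rw [he]; exact hG
  have attain : ∀ r : ℝ, 0 ≤ r → ∃ s : Fin N → ℝ,
      (∀ i, 0 ≤ s i) ∧ (∑ i, μ i * s i) = r ∧ (∑ i, γ i (s i)) = ᾱ r := by
    intro r hr
    obtain ⟨s, h1, h2, h3⟩ := (hg r hr).1
    exact ⟨s, h1, h2, h3.symm⟩
  have γnn : ∀ (i : Fin N) (x : ℝ), 0 ≤ x → 0 ≤ γ i x := by
    intro i x hx
    have := (hγ_mono i).monotoneOn (mem_Ici.mpr le_rfl) (mem_Ici.mpr hx) hx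
    rwa [hγ_zero i] at this
  have hnn : ∀ r : ℝ, 0 ≤ r → 0 ≤ ᾱ r := by
    intro r hr
    obtain ⟨s, h1, h2, h3⟩ := attain r hr
    rw [← h3]
    exact Finset.sum_nonneg fun i _ => γnn i (s i) (h1 i)
  have hsm : StrictMonoOn ᾱ (Ici 0) := by
    intro a ha b hb hab
    simp only [mem_Ici] at ha hb
    obtain ⟨s, hs1, hs2, hs3⟩ := attain a ha
    have hba : 0 < (b - a) / μ i0 := div_pos (by linarith) (hμ i0)
    have hs'1 : ∀ i, 0 ≤ s i + (if i = i0 then (b - a) / μ i0 else 0) := by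
      intro i; split
      · linarith [hs1 i]
      · simpa using hs1 i
    have hs'2 : ∑ i, μ i * (s i + (if i = i0 then (b - a) / μ i0 else 0)) = b := by
      simp only [mul_add, Finset.sum_add_distrib, hs2]
      have h : ∀ i : Fin N, μ i * (if i = i0 then (b - a) / μ i0 else 0)
          = if i = i0 then μ i0 * ((b - a) / μ i0) else 0 := by
        intro i; split <;> simp_all
      simp only [h, Finset.sum_ite_eq' Finset.univ i0, Finset.mem_univ, if_true]
      rw [mul_div_cancel₀ _ (hμ i0).ne']
      ring
    have hval : ∑ i, γ i (s i)
        < ∑ i, γ i (s i + (if i = i0 then (b - a) / μ i0 else 0)) := by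
      apply Finset.sum_lt_sum
      · intro i _
        by_cases h : i = i0
        · rw [h, if_pos rfl]
          exact (hγ_mono i0 (mem_Ici.mpr (hs1 i0))
            (mem_Ici.mpr (by linarith [hs1 i0])) (by linarith [hs1 i0])).le
        · rw [if_neg h]; simp
      · refine ⟨i0, Finset.mem_univ i0, ?_⟩
        rw [if_pos rfl]
        exact hγ_mono i0 (mem_Ici.mpr (hs1 i0))
          (mem_Ici.mpr (by linarith [hs1 i0])) (by linarith [hs1 i0])
    have hub : ∑ i, γ i (s i + (if i = i0 then (b - a) / μ i0 else 0)) ≤ ᾱ b :=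
      (hg b hb).2 ⟨fun i => s i + (if i = i0 then (b - a) / μ i0 else 0), hs'1, hs'2, rfl⟩
    calc ᾱ a = ∑ i, γ i (s i) := hs3.symm
      _ < ∑ i, γ i (s i + (if i = i0 then (b - a) / μ i0 else 0)) := hval
      _ ≤ ᾱ b := hub
  have hzero : ᾱ 0 = 0 := by
    obtain ⟨s, h1, h2, h3⟩ := attain 0 le_rfl
    have hz : ∀ i, s i = 0 := by
      intro i
      have hterm : μ i * s i = 0 :=
        (Finset.sum_eq_zero_iff_of_nonneg
          (fun j _ => mul_nonneg (hμ j).le (h1 j))).mp h2 i (Finset.mem_univ i)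
      rcases mul_eq_zero.mp hterm with h | h
      · exact absurd h (hμ i).ne'
      · exact h
    rw [← h3]
    simp [hz, hγ_zero]
  have htop : Tendsto ᾱ atTop atTop := by
    apply tendsto_atTop_mono' atTop (f₁ := fun r => γ i0 (r / μ i0))
    · filter_upwards [eventually_ge_atTop (0 : ℝ)] with r hr
      have hval : γ i0 (r / μ i0) = ∑ i, γ i (if i = i0 then r / μ i0 else 0) := by
        have : ∀ i : Fin N, γ i (if i = i0 then r / μ i0 else 0)
            = if i = i0 then γ i0 (r / μ i0) else 0 := by
          intro i; split <;> simp_all [hγ_zero]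
        simp only [this, Finset.sum_ite_eq' Finset.univ i0, Finset.mem_univ, if_true]
      refine (hg r hr).2 ⟨fun i => if i = i0 then r / μ i0 else 0, fun i => ?_, ?_, hval⟩
      · dsimp only; split
        · exact div_nonneg hr (hμ i0).le
        · exact le_refl 0
      · have : ∀ i : Fin N, μ i * (if i = i0 then r / μ i0 else 0)
            = if i = i0 then μ i0 * (r / μ i0) else 0 := by
          intro i; split <;> simp_all
        simp only [this, Finset.sum_ite_eq' Finset.univ i0, Finset.mem_univ, if_true]
        rw [mul_div_cancel₀ _ (hμ i0).ne']
    · exact (hγ_top i0).comp (tendsto_id.atTop_div_const (hμ i0))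
  have hNne : (N : ℝ) ≠ 0 := by positivity
  have hcont : ContinuousOn ᾱ (Ici 0) := by
    rw [Metric.continuousOn_iff]
    intro r0 hr0 ε hε
    simp only [mem_Ici] at hr0
    have hδ : ∀ i : Fin N, ∃ δ > 0, ∀ x ∈ Icc (0:ℝ) ((r0 + 1) / μ i),
        ∀ y ∈ Icc (0:ℝ) ((r0 + 1) / μ i), dist x y < δ → dist (γ i x) (γ i y) < ε / N := by
      intro i
      have hu := (isCompact_Icc (a := (0:ℝ)) (b := (r0 + 1) / μ i)).uniformContinuousOn_of_continuous
        ((hγ_cont i).mono Icc_subset_Ici_self)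
      rw [Metric.uniformContinuousOn_iff] at hu
      exact hu (ε / N) (by positivity)
    choose δf hδf1 hδf2 using hδ
    have hune : (Finset.univ : Finset (Fin N)).Nonempty := ⟨i0, Finset.mem_univ i0⟩
    set δ' := Finset.univ.inf' hune (fun i => μ i * δf i) with hδ'
    have hδ'pos : 0 < δ' := by
      rw [hδ', Finset.lt_inf'_iff]
      exact fun i _ => mul_pos (hμ i) (hδf1 i)
    have key : ∀ a b : ℝ, 0 ≤ a → a ≤ b → b ≤ r0 + 1 → b - a < δ' → ᾱ b - ᾱ a < ε := by
      intro a b ha hab hbr hd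
      rcases eq_or_lt_of_le (ha.trans hab) with hb0 | hb0
      · have ha0 : a = 0 := le_antisymm (hb0 ▸ hab) ha
        rw [ha0, ← hb0]; simpa using hε
      · obtain ⟨s, hs1, hs2, hs3⟩ := attain b hb0.le
        set θ := a / b with hθ
        have hθ0 : 0 ≤ θ := div_nonneg ha hb0.le
        have hθ1 : θ ≤ 1 := div_le_one_of_le₀ hab hb0.le
        have hsb : ∀ i, s i ≤ b / μ i := by
          intro i
          rw [le_div_iff₀ (hμ i), mul_comm]
          calc μ i * s i ≤ ∑ j, μ j * s j :=
                Finset.single_le_sum (fun j _ => mul_nonneg (hμ j).le (hs1 j)) (Finset.mem_univ i)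
            _ = b := hs2
        have hfeas : ∑ i, μ i * (θ * s i) = a := by
          have h1 : ∑ i, μ i * (θ * s i) = θ * ∑ i, μ i * s i := by
            rw [Finset.mul_sum]
            exact Finset.sum_congr rfl fun i _ => by ring
          rw [h1, hs2, hθ, div_mul_cancel₀ _ hb0.ne']
        have hlow : ∑ i, γ i (θ * s i) ≤ ᾱ a :=
          (hg a ha).2 ⟨fun i => θ * s i, fun i => mul_nonneg hθ0 (hs1 i), hfeas, rfl⟩
        have hterm : ∀ i : Fin N, γ i (s i) - γ i (θ * s i) < ε / N := by
          intro i
          have hxub : s i ≤ (r0 + 1) / μ i := by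
            refine (hsb i).trans ?_
            have h0 := hμ i
            gcongr
          have hx : s i ∈ Icc (0:ℝ) ((r0 + 1) / μ i) := ⟨hs1 i, hxub⟩
          have hy : θ * s i ∈ Icc (0:ℝ) ((r0 + 1) / μ i) :=
            ⟨mul_nonneg hθ0 (hs1 i), le_trans (mul_le_of_le_one_left (hs1 i) hθ1) hxub⟩
          have hdist : dist (s i) (θ * s i) < δf i := by
            have hge : 0 ≤ s i - θ * s i := by nlinarith [hs1 i]
            rw [Real.dist_eq, abs_of_nonneg hge]
            have h2 : (1 - θ) * s i ≤ (1 - θ) * (b / μ i) := by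
              have := hsb i; nlinarith
            have h3 : (1 - θ) * (b / μ i) = (b - a) / μ i := by
              rw [hθ]; field_simp
            have h4 : (b - a) / μ i < δf i := by
              rw [div_lt_iff₀ (hμ i)]
              calc b - a < δ' := hd
                _ ≤ μ i * δf i := Finset.inf'_le _ (Finset.mem_univ i)
                _ = δf i * μ i := mul_comm _ _
            nlinarith
          have habs := hδf2 i (s i) hx (θ * s i) hy hdist
          rw [Real.dist_eq] at habs
          calc γ i (s i) - γ i (θ * s i) ≤ |γ i (s i) - γ i (θ * s i)| := le_abs_self _
            _ < ε / N := habs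
        have hsum : ∑ i, (γ i (s i) - γ i (θ * s i)) < ε := by
          calc ∑ i, (γ i (s i) - γ i (θ * s i)) < ∑ _i : Fin N, ε / N :=
                Finset.sum_lt_sum_of_nonempty hune (fun i _ => hterm i)
            _ = ε := by
              rw [Finset.sum_const, Finset.card_univ, Fintype.card_fin, nsmul_eq_mul]
              field_simp
        rw [Finset.sum_sub_distrib] at hsum
        linarith [hlow]
    refine ⟨min δ' 1, lt_min hδ'pos one_pos, ?_⟩
    intro a ha hdist
    simp only [mem_Ici] at ha
    rw [Real.dist_eq] at hdist
    have hd1 : |a - r0| < δ' := lt_of_lt_of_le hdist (min_le_left _ _)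
    have hd2 : |a - r0| < 1 := lt_of_lt_of_le hdist (min_le_right _ _)
    rw [Real.dist_eq]
    rcases le_total a r0 with h | h
    · have hd1' : r0 - a < δ' := by
        have := neg_le_abs (a - r0); linarith
      have hk := key a r0 ha h (by linarith) hd1'
      have hm : ᾱ a ≤ ᾱ r0 := hsm.monotoneOn (mem_Ici.mpr ha) (mem_Ici.mpr hr0) h
      rw [abs_of_nonpos (by linarith)]
      linarith
    · have hd1' : a - r0 < δ' := by
        have := le_abs_self (a - r0); linarith
      have hab : a ≤ r0 + 1 := by
        have := le_abs_self (a - r0); linarith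
      have hk := key r0 a hr0 h hab hd1'
      have hm : ᾱ r0 ≤ ᾱ a := hsm.monotoneOn (mem_Ici.mpr hr0) (mem_Ici.mpr ha) h
      rw [abs_of_nonneg (by linarith)]
      linarith
  exact ⟨attain, hnn, hcont, hsm, hzero, htop⟩
end

section
/- Let N ≥ 1, let κ_1, …, κ_N be class-K functions, and let μ_1, …, μ_N > 0. For r ≥ 0 define κ(r) := inf{ Σ_{i=1}^N μ_i κ_i(s_i) : s_1,…,s_N ≥ 0 and Σ_{i=1}^N μ_i s_i = r }. Then for every r ≥ 0 the infimum is attained (i.e., it is a minimum), and the function κ : [0,∞) → [0,∞) is a class-K function. -/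
open Set Filter

lemma stmt7_nonneg_term {N : ℕ} {κ : Fin N → ℝ → ℝ}
    (hκ_mono : ∀ i, StrictMonoOn (κ i) (Ici 0))
    (hκ_zero : ∀ i, κ i 0 = 0) (i : Fin N) {x : ℝ} (hx : 0 ≤ x) : 0 ≤ κ i x := by
  rcases eq_or_lt_of_le hx with h | h
  · rw [← h, hκ_zero]
  · have := (hκ_mono i) self_mem_Ici hx h
    rw [hκ_zero] at this
    exact this.le

lemma stmt7_attain {N : ℕ} (hN : 1 ≤ N) {κ : Fin N → ℝ → ℝ}
    (hκ_cont : ∀ i, ContinuousOn (κ i) (Ici 0))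
    {μ : Fin N → ℝ} (hμ : ∀ i, 0 < μ i) (r : ℝ) (hr : 0 ≤ r) :
    ∃ s : Fin N → ℝ, (∀ i, 0 ≤ s i) ∧ (∑ i, μ i * s i) = r ∧
      ∀ s' : Fin N → ℝ, (∀ i, 0 ≤ s' i) → (∑ i, μ i * s' i) = r →
        (∑ i, μ i * κ i (s i)) ≤ ∑ i, μ i * κ i (s' i) := by
  set K : Set (Fin N → ℝ) := {s | (∀ i, 0 ≤ s i) ∧ (∑ i, μ i * s i) = r} with hK
  have hKclosed : IsClosed K := by
    have : K = (⋂ i, (fun s : Fin N → ℝ => s i) ⁻¹' Ici 0) ∩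
        ((fun s : Fin N → ℝ => ∑ i, μ i * s i) ⁻¹' {r}) := by
      ext s; simp [hK, Set.mem_iInter]
    rw [this]
    exact (isClosed_iInter fun i => isClosed_Ici.preimage (continuous_apply i)).inter
      (isClosed_singleton.preimage (continuous_finset_sum _ fun i _ =>
        (continuous_const.mul (continuous_apply i) : Continuous fun s : Fin N → ℝ => μ i * s i)))
  have hKsub : K ⊆ Set.pi Set.univ (fun i => Icc 0 (r / μ i)) := by
    rintro s ⟨h1, h2⟩ i _
    refine ⟨h1 i, ?_⟩
    have : μ i * s i ≤ ∑ j, μ j * s j :=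
      Finset.single_le_sum (f := fun j => μ j * s j)
        (fun j _ => mul_nonneg (hμ j).le (h1 j)) (Finset.mem_univ i)
    rw [h2] at this
    rw [le_div_iff₀ (hμ i)]
    linarith [this]
  have hKcpt : IsCompact K :=
    (isCompact_univ_pi fun i => isCompact_Icc).of_isClosed_subset hKclosed hKsub
  have hKne : K.Nonempty := by
    refine ⟨fun i => if i = ⟨0, hN⟩ then r / μ ⟨0, hN⟩ else 0, ?_, ?_⟩
    · intro i
      by_cases h : i = (⟨0, hN⟩ : Fin N) <;> simp [h, div_nonneg hr (hμ _).le]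
    · rw [Finset.sum_eq_single (⟨0, hN⟩ : Fin N) (fun b _ hb => by simp [hb])
        (by simp)]
      simp only [if_pos rfl, if_true]
      rw [mul_div_cancel₀ _ (hμ _).ne']
  have hfc : ContinuousOn (fun s : Fin N → ℝ => ∑ i, μ i * κ i (s i)) K := by
    apply continuousOn_finset_sum
    intro i _
    exact continuousOn_const.mul
      ((hκ_cont i).comp (continuous_apply i).continuousOn (fun s hs => hs.1 i))
  obtain ⟨s, hsK, hmin⟩ := hKcpt.exists_isMinOn hKne hfc
  exact ⟨s, hsK.1, hsK.2, fun s' h1 h2 => hmin ⟨h1, h2⟩⟩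


lemma stmt7_sum_update {N : ℕ} (w f : Fin N → ℝ) (j : Fin N) (v : ℝ) :
    ∑ i, w i * Function.update f j v i = (∑ i, w i * f i) + w j * (v - f j) := by
  have h : ∑ i, (w i * Function.update f j v i - w i * f i) = w j * (v - f j) := by
    rw [Finset.sum_eq_single j]
    · rw [Function.update_self]; ring
    · intro b _ hb
      rw [Function.update_of_ne hb]; ring
    · intro h; exact absurd (Finset.mem_univ j) h
  rw [Finset.sum_sub_distrib] at h
  linarith


lemma stmt7_key {N : ℕ} (hN : 1 ≤ N) {κ : Fin N → ℝ → ℝ}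
    (hκ_cont : ∀ i, ContinuousOn (κ i) (Ici 0))
    {μ : Fin N → ℝ} (hμ : ∀ i, 0 < μ i)
    {κtot : ℝ → ℝ}
    (hκtot : ∀ r, κtot r = sInf {t : ℝ | ∃ s : Fin N → ℝ,
      (∀ i, 0 ≤ s i) ∧ (∑ i, μ i * s i) = r ∧ t = ∑ i, μ i * κ i (s i)})
    (r : ℝ) (hr : 0 ≤ r) :
    ∃ s : Fin N → ℝ, (∀ i, 0 ≤ s i) ∧ (∑ i, μ i * s i) = r ∧
      (∀ s' : Fin N → ℝ, (∀ i, 0 ≤ s' i) → (∑ i, μ i * s' i) = r →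
        (∑ i, μ i * κ i (s i)) ≤ ∑ i, μ i * κ i (s' i)) ∧
      κtot r = ∑ i, μ i * κ i (s i) := by
  obtain ⟨s, h1, h2, hmin⟩ := stmt7_attain hN hκ_cont hμ r hr
  refine ⟨s, h1, h2, hmin, ?_⟩
  rw [hκtot]
  apply le_antisymm
  · exact csInf_le ⟨_, fun t ⟨s', a, b, c⟩ => c ▸ hmin s' a b⟩ ⟨s, h1, h2, rfl⟩
  · exact le_csInf ⟨_, s, h1, h2, rfl⟩ (fun t ⟨s', a, b, c⟩ => c ▸ hmin s' a b)

lemma stmt7_strictmono {N : ℕ} (hN : 1 ≤ N) {κ : Fin N → ℝ → ℝ}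
    (hκ_cont : ∀ i, ContinuousOn (κ i) (Ici 0))
    (hκ_mono : ∀ i, StrictMonoOn (κ i) (Ici 0))
    {μ : Fin N → ℝ} (hμ : ∀ i, 0 < μ i)
    {κtot : ℝ → ℝ}
    (hκtot : ∀ r, κtot r = sInf {t : ℝ | ∃ s : Fin N → ℝ,
      (∀ i, 0 ≤ s i) ∧ (∑ i, μ i * s i) = r ∧ t = ∑ i, μ i * κ i (s i)}) :
    StrictMonoOn κtot (Ici 0) := by
  intro r1 hr1 r2 hr2 h12
  simp only [mem_Ici] at hr1 hr2
  obtain ⟨s, h1, h2, hmin, heq⟩ := stmt7_key hN hκ_cont hμ hκtot r2 hr2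
  obtain ⟨s1, h1', h2', hmin', heq'⟩ := stmt7_key hN hκ_cont hμ hκtot r1 hr1
  have hr2pos : 0 < r2 := lt_of_le_of_lt hr1 h12
  set c := r1 / r2 with hc
  have hc0 : 0 ≤ c := div_nonneg hr1 hr2pos.le
  have hc1 : c < 1 := (div_lt_one hr2pos).mpr h12
  have hfeas : ∀ i, 0 ≤ c * s i := fun i => mul_nonneg hc0 (h1 i)
  have hsum : ∑ i, μ i * (c * s i) = r1 := by
    have e : ∑ i, μ i * (c * s i) = c * ∑ i, μ i * s i := by
      rw [Finset.mul_sum]; exact Finset.sum_congr rfl fun i _ => by ring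
    rw [e, h2, hc, div_mul_cancel₀ r1 hr2pos.ne']
  have hle : κtot r1 ≤ ∑ i, μ i * κ i (c * s i) := by
    rw [heq']; exact hmin' _ hfeas hsum
  have hex : ∃ i, 0 < s i := by
    by_contra h
    push_neg at h
    have hz : ∀ i, s i = 0 := fun i => le_antisymm (h i) (h1 i)
    rw [Finset.sum_congr rfl (fun i _ => by rw [hz i, mul_zero])] at h2
    simp at h2
    exact hr2pos.ne' h2.symm
  obtain ⟨i0, hi0⟩ := hex
  have hlt : ∑ i, μ i * κ i (c * s i) < ∑ i, μ i * κ i (s i) := by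
    apply Finset.sum_lt_sum
    · intro i _
      apply mul_le_mul_of_nonneg_left _ (hμ i).le
      exact (hκ_mono i).monotoneOn (hfeas i) (h1 i) (by nlinarith [h1 i])
    · exact ⟨i0, Finset.mem_univ i0,
        mul_lt_mul_of_pos_left ((hκ_mono i0) (hfeas i0) (h1 i0) (by nlinarith)) (hμ i0)⟩
  rw [heq]
  linarith


lemma stmt7_cont {N : ℕ} (hN : 1 ≤ N) {κ : Fin N → ℝ → ℝ}
    (hκ_cont : ∀ i, ContinuousOn (κ i) (Ici 0))
    (hκ_mono : ∀ i, StrictMonoOn (κ i) (Ici 0))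
    (hκ_zero : ∀ i, κ i 0 = 0)
    {μ : Fin N → ℝ} (hμ : ∀ i, 0 < μ i)
    {κtot : ℝ → ℝ}
    (hκtot : ∀ r, κtot r = sInf {t : ℝ | ∃ s : Fin N → ℝ,
      (∀ i, 0 ≤ s i) ∧ (∑ i, μ i * s i) = r ∧ t = ∑ i, μ i * κ i (s i)}) :
    ContinuousOn κtot (Ici 0) := by
  set i0 : Fin N := ⟨0, hN⟩ with hi0
  have hmono : MonotoneOn κtot (Ici 0) :=
    (stmt7_strictmono hN hκ_cont hκ_mono hμ hκtot).monotoneOn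
  have hub : ∀ r : ℝ, ∀ s : Fin N → ℝ, 0 ≤ r → (∀ i, 0 ≤ s i) → (∑ i, μ i * s i) = r →
      κtot r ≤ ∑ i, μ i * κ i (s i) := by
    intro r s hr h1 h2
    obtain ⟨s0, g1, g2, gmin, geq⟩ := stmt7_key hN hκ_cont hμ hκtot r hr
    rw [geq]; exact gmin s h1 h2
  intro r hrmem
  have hr : 0 ≤ r := mem_Ici.mp hrmem
  rw [Metric.continuousWithinAt_iff]
  intro ε hε
  -- right-continuity bound
  obtain ⟨s, hs1, hs2, hsmin, hseq⟩ := stmt7_key hN hκ_cont hμ hκtot r hr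
  have hcw := (hκ_cont i0) (s i0) (hs1 i0)
  rw [Metric.continuousWithinAt_iff] at hcw
  obtain ⟨δ1, hδ1pos, hδ1⟩ := hcw (ε / μ i0) (div_pos hε (hμ i0))
  have hright : ∀ r' : ℝ, r ≤ r' → r' - r < δ1 * μ i0 → |κtot r' - κtot r| < ε := by
    intro r' hrr' hclose
    have hr' : 0 ≤ r' := le_trans hr hrr'
    set d := (r' - r) / μ i0 with hd
    have hd0 : 0 ≤ d := div_nonneg (by linarith) (hμ i0).le
    have hdlt : d < δ1 := by rw [hd, div_lt_iff₀ (hμ i0)]; linarith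
    set s' := Function.update s i0 (s i0 + d) with hs'
    have hfeas' : ∀ i, 0 ≤ s' i := by
      intro i
      by_cases h : i = i0
      · rw [hs', h, Function.update_self]; linarith [hs1 i0]
      · rw [hs', Function.update_of_ne h]; exact hs1 i
    have hsum' : ∑ i, μ i * s' i = r' := by
      rw [hs', stmt7_sum_update, hs2]
      have e : μ i0 * (s i0 + d - s i0) = r' - r := by
        have e0 : s i0 + d - s i0 = d := by ring
        rw [e0, hd]
        field_simp
        exact mul_div_cancel_left₀ _ (hμ i0).ne'
      linarith
    have hval : ∑ i, μ i * κ i (s' i)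
        = (∑ i, μ i * κ i (s i)) + μ i0 * (κ i0 (s i0 + d) - κ i0 (s i0)) := by
      have e : ∀ i, κ i (s' i) = Function.update (fun i => κ i (s i)) i0 (κ i0 (s i0 + d)) i := by
        intro i
        by_cases h : i = i0
        · subst h; rw [hs', Function.update_self, Function.update_self]
        · rw [hs', Function.update_of_ne h, Function.update_of_ne h]
      calc ∑ i, μ i * κ i (s' i)
          = ∑ i, μ i * Function.update (fun i => κ i (s i)) i0 (κ i0 (s i0 + d)) i :=
            Finset.sum_congr rfl fun i _ => by rw [e i]
        _ = _ := by rw [stmt7_sum_update]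
    have hdist : dist (s i0 + d) (s i0) < δ1 := by
      rw [Real.dist_eq, abs_of_nonneg (by linarith : (0:ℝ) ≤ s i0 + d - s i0)]
      linarith
    have hkd := hδ1 (mem_Ici.mpr (by linarith [hs1 i0] : (0:ℝ) ≤ s i0 + d)) hdist
    rw [Real.dist_eq] at hkd
    have hkdle : κ i0 (s i0 + d) - κ i0 (s i0) < ε / μ i0 := lt_of_le_of_lt (le_abs_self _) hkd
    have hA : κtot r' ≤ κtot r + μ i0 * (κ i0 (s i0 + d) - κ i0 (s i0)) := by
      have h := hub r' s' hr' hfeas' hsum'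
      rw [hval] at h
      linarith [h, hseq.ge, hseq.le]
    have hB : κtot r ≤ κtot r' := hmono (mem_Ici.mpr hr) (mem_Ici.mpr hr') hrr'
    have hC : μ i0 * (κ i0 (s i0 + d) - κ i0 (s i0)) < ε := by
      have h7 := (lt_div_iff₀ (hμ i0)).mp hkdle
      calc μ i0 * (κ i0 (s i0 + d) - κ i0 (s i0))
          = (κ i0 (s i0 + d) - κ i0 (s i0)) * μ i0 := mul_comm _ _
        _ < ε := h7
    rw [abs_of_nonneg (by linarith)]
    linarith
  by_cases hr0 : r = 0
  · subst hr0
    refine ⟨δ1 * μ i0, mul_pos hδ1pos (hμ i0), ?_⟩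
    intro r' hr'mem hdr
    have hr' : 0 ≤ r' := mem_Ici.mp hr'mem
    rw [Real.dist_eq] at hdr
    rw [Real.dist_eq]
    exact hright r' hr' (by rw [abs_of_nonneg (by linarith)] at hdr; linarith)
  · have hrpos : 0 < r := lt_of_le_of_ne hr (Ne.symm hr0)
    have hNpos : 0 < (N:ℝ) := by exact_mod_cast Nat.lt_of_lt_of_le Nat.zero_lt_one hN
    have huc : ∀ i : Fin N, ∃ δ > 0, ∀ x ∈ Icc (0:ℝ) (2*r/μ i), ∀ y ∈ Icc (0:ℝ) (2*r/μ i),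
        dist x y < δ → dist (κ i x) (κ i y) < ε / (N * μ i) := by
      intro i
      have hsub : Icc (0:ℝ) (2*r/μ i) ⊆ Ici 0 := Icc_subset_Ici_self
      have h := isCompact_Icc.uniformContinuousOn_of_continuous ((hκ_cont i).mono hsub)
      rw [Metric.uniformContinuousOn_iff] at h
      obtain ⟨δ, hδ, h'⟩ := h (ε / (N * μ i)) (div_pos hε (mul_pos hNpos (hμ i)))
      exact ⟨δ, hδ, fun x hx y hy hxy => h' x hx y hy hxy⟩
    choose δf hδfpos hδf using huc
    have hne : (Finset.univ : Finset (Fin N)).Nonempty := ⟨i0, Finset.mem_univ i0⟩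
    set δ2 := min (r/2) (Finset.univ.inf' hne (fun i => μ i * δf i / 2)) with hδ2
    have hδ2pos : 0 < δ2 := by
      rw [hδ2, lt_min_iff]
      refine ⟨by linarith, (Finset.lt_inf'_iff hne).mpr fun i _ => by
        have := mul_pos (hμ i) (hδfpos i); linarith⟩
    have hδ2le : ∀ i, 2 * δ2 ≤ μ i * δf i := by
      intro i
      have h1 : δ2 ≤ Finset.univ.inf' hne (fun i => μ i * δf i / 2) := min_le_right _ _
      have h2 : Finset.univ.inf' hne (fun i => μ i * δf i / 2) ≤ μ i * δf i / 2 :=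
        Finset.inf'_le _ (Finset.mem_univ i)
      linarith
    have hleft : ∀ r', 0 ≤ r' → r' ≤ r → r - r' < δ2 → |κtot r' - κtot r| < ε := by
      intro r' hr'0 hr'r hclose
      have hδ2r : δ2 ≤ r/2 := min_le_left _ _
      have hr'pos : 0 < r' := by linarith
      obtain ⟨s', h1', h2', hmin', heq'⟩ := stmt7_key hN hκ_cont hμ hκtot r' hr'0
      set c := r / r' with hc
      have hc1 : 1 ≤ c := (le_div_iff₀ hr'pos).mpr (by linarith)
      have hc2 : c ≤ 2 := by rw [hc, div_le_iff₀ hr'pos]; linarith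
      have hbound : ∀ i, μ i * s' i ≤ r' := by
        intro i
        have h := Finset.single_le_sum (f := fun j => μ j * s' j)
          (fun j _ => mul_nonneg (hμ j).le (h1' j)) (Finset.mem_univ i)
        rw [h2'] at h; exact h
      have hfeas'' : ∀ i, 0 ≤ c * s' i := fun i => mul_nonneg (by linarith) (h1' i)
      have hsum'' : ∑ i, μ i * (c * s' i) = r := by
        have e : ∑ i, μ i * (c * s' i) = c * ∑ i, μ i * s' i := by
          rw [Finset.mul_sum]; exact Finset.sum_congr rfl fun i _ => by ring
        rw [e, h2', hc, div_mul_cancel₀ r hr'pos.ne']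
      have hterm : ∀ i : Fin N, μ i * (κ i (c * s' i) - κ i (s' i)) < ε / N := by
        intro i
        have hmemx : s' i ∈ Icc (0:ℝ) (2*r/μ i) := by
          refine ⟨h1' i, ?_⟩
          rw [le_div_iff₀ (hμ i)]
          nlinarith [hbound i]
        have hmemy : c * s' i ∈ Icc (0:ℝ) (2*r/μ i) := by
          refine ⟨hfeas'' i, ?_⟩
          rw [le_div_iff₀ (hμ i)]
          nlinarith [hbound i, h1' i, mul_le_mul hc2 (hbound i)
            (mul_nonneg (hμ i).le (h1' i)) (by norm_num : (0:ℝ) ≤ 2)]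
        have hdd : dist (c * s' i) (s' i) < δf i := by
          rw [Real.dist_eq, abs_of_nonneg (by nlinarith [h1' i] : (0:ℝ) ≤ c * s' i - s' i)]
          rw [hc]
          have e1 : r / r' * s' i - s' i = (r - r') * s' i / r' := by field_simp
          rw [e1, div_lt_iff₀ hr'pos]
          nlinarith [mul_le_mul_of_nonneg_right (hδ2le i) (h1' i),
            mul_le_mul_of_nonneg_left (hbound i) (hδfpos i).le,
            mul_pos (hδfpos i) hr'pos,
            mul_le_mul_of_nonneg_right hclose.le (h1' i)]
        have h4 := hδf i _ hmemy _ hmemx hdd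
        rw [Real.dist_eq] at h4
        have h5 : κ i (c * s' i) - κ i (s' i) < ε / (↑N * μ i) :=
          lt_of_le_of_lt (le_abs_self _) h4
        have h6 : κ i (c * s' i) - κ i (s' i) < ε / ↑N / μ i := by rw [div_div]; exact h5
        have h7 := (lt_div_iff₀ (hμ i)).mp h6
        calc μ i * (κ i (c * s' i) - κ i (s' i))
            = (κ i (c * s' i) - κ i (s' i)) * μ i := mul_comm _ _
          _ < ε / ↑N := h7
      have hsumlt : ∑ i, μ i * (κ i (c * s' i) - κ i (s' i)) < ε := by
        calc ∑ i, μ i * (κ i (c * s' i) - κ i (s' i)) < ∑ _i : Fin N, ε / ↑N :=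
              Finset.sum_lt_sum_of_nonempty hne (fun i _ => hterm i)
          _ = ↑N * (ε / ↑N) := by
              rw [Finset.sum_const, Finset.card_univ, Fintype.card_fin, nsmul_eq_mul]
          _ = ε := by field_simp
      have hA : κtot r ≤ ∑ i, μ i * κ i (c * s' i) := hub r _ hr hfeas'' hsum''
      have hB : ∑ i, μ i * κ i (c * s' i) - ∑ i, μ i * κ i (s' i)
          = ∑ i, μ i * (κ i (c * s' i) - κ i (s' i)) := by
        rw [← Finset.sum_sub_distrib]
        exact Finset.sum_congr rfl fun i _ => by ring
      have hC : κtot r' ≤ κtot r := hmono (mem_Ici.mpr hr'0) (mem_Ici.mpr hr) hr'r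
      rw [abs_of_nonpos (by linarith)]
      linarith [hA, hsumlt, hB, heq'.le, heq'.ge]
    refine ⟨min (δ1 * μ i0) δ2, lt_min (mul_pos hδ1pos (hμ i0)) hδ2pos, ?_⟩
    intro r' hr'mem hdr
    rw [Real.dist_eq] at hdr
    rw [Real.dist_eq]
    have hr' : 0 ≤ r' := mem_Ici.mp hr'mem
    obtain ⟨hd1, hd2⟩ := abs_lt.mp hdr
    rcases le_or_gt r r' with h | h
    · exact hright r' h (by
        have := min_le_left (δ1 * μ i0) δ2
        linarith)
    · exact hleft r' hr' h.le (by
        have := min_le_right (δ1 * μ i0) δ2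
        linarith)

/-- given class-`K` functions `κ_1, …, κ_N` and weights `μ_i > 0`, the function
`κ(r) := inf{ Σ_i μ_i κ_i(s_i) : s_i ≥ 0, Σ_i μ_i s_i = r }` attains its infimum for every
`r ≥ 0` and is itself a class-`K` function. -/
theorem stmt_7
    (N : ℕ) (hN : 1 ≤ N)
    (κ : Fin N → ℝ → ℝ)
    (hκ_cont : ∀ i, ContinuousOn (κ i) (Ici 0))
    (hκ_mono : ∀ i, StrictMonoOn (κ i) (Ici 0))
    (hκ_zero : ∀ i, κ i 0 = 0)
    (μ : Fin N → ℝ) (hμ : ∀ i, 0 < μ i)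
    (κtot : ℝ → ℝ)
    (hκtot : ∀ r, κtot r = sInf {t : ℝ | ∃ s : Fin N → ℝ,
      (∀ i, 0 ≤ s i) ∧ (∑ i, μ i * s i) = r ∧ t = ∑ i, μ i * κ i (s i)}) :
    (∀ r : ℝ, 0 ≤ r → ∃ s : Fin N → ℝ,
        (∀ i, 0 ≤ s i) ∧ (∑ i, μ i * s i) = r ∧ (∑ i, μ i * κ i (s i)) = κtot r) ∧
    (∀ r : ℝ, 0 ≤ r → 0 ≤ κtot r) ∧
    ContinuousOn κtot (Ici 0) ∧ StrictMonoOn κtot (Ici 0) ∧ κtot 0 = 0 := by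
  refine ⟨?_, ?_, stmt7_cont hN hκ_cont hκ_mono hκ_zero hμ hκtot,
    stmt7_strictmono hN hκ_cont hκ_mono hμ hκtot, ?_⟩
  · intro r hr
    obtain ⟨s, h1, h2, _, heq⟩ := stmt7_key hN hκ_cont hμ hκtot r hr
    exact ⟨s, h1, h2, heq.symm⟩
  · intro r hr
    obtain ⟨s, h1, _, _, heq⟩ := stmt7_key hN hκ_cont hμ hκtot r hr
    rw [heq]
    exact Finset.sum_nonneg fun i _ => mul_nonneg (hμ i).le
      (stmt7_nonneg_term hκ_mono hκ_zero i (h1 i))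
  · obtain ⟨s, h1, h2, hmin, heq⟩ := stmt7_key hN hκ_cont hμ hκtot 0 le_rfl
    have hz : (∑ i, μ i * κ i (s i)) ≤ ∑ i, μ i * κ i ((fun _ => (0:ℝ)) i) :=
      hmin (fun _ => 0) (fun _ => le_rfl) (by simp)
    simp only [hκ_zero, mul_zero, Finset.sum_const_zero] at hz
    have hnn : 0 ≤ ∑ i, μ i * κ i (s i) :=
      Finset.sum_nonneg fun i _ => mul_nonneg (hμ i).le
        (stmt7_nonneg_term hκ_mono hκ_zero i (h1 i))
    rw [heq]
    linarith
end

section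
/- Let N ≥ 1 and for i = 1,…,N let G_i ∈ ℝ^{r_i×p_i}, Ĝ_i ∈ ℝ^{r_i×p̂_i}, H_i ∈ ℝ^{q_i×q̂_i}, let X̄_i ∈ ℝ^{(r_i+q_i)×(r_i+q_i)} be symmetric with conformal blocks X̄_i^{11}, X̄_i^{12}, X̄_i^{21}, X̄_i^{22}, and let μ_i > 0. Set G = diag(G_1,…,G_N), Ĝ = diag(Ĝ_1,…,Ĝ_N), H = diag(H_1,…,H_N), q̃ = Σ_i q_i, and X_cmp = [diag(μ_1 X̄_1^{11},…,μ_N X̄_N^{11}), diag(μ_1 X̄_1^{12},…,μ_N X̄_N^{12}); diag(μ_1 X̄_1^{21},…,μ_N X̄_N^{21}), diag(μ_1 X̄_1^{22},…,μ_N X̄_N^{22})]. Suppose M ∈ ℝ^{(Σp_i)×q̃} and M̂ ∈ ℝ^{(Σp̂_i)×(Σq̂_i)} satisfy: [GM; I_{q̃}]ᵀ X_cmp [GM; I_{q̃}] is negative semidefinite, and GMH = ĜM̂. Then for all stacked vectors z = (z_1,…,z_N) with z_i ∈ ℝ^{q_i} and ẑ = (ẑ_1,…,ẑ_N) with ẑ_i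 ∈ ℝ^{q̂_i}, writing w := Mz and ŵ := M̂ẑ with block components w_i ∈ ℝ^{p_i} and ŵ_i ∈ ℝ^{p̂_i}, one has Σ_{i=1}^N μ_i [G_i w_i − Ĝ_i ŵ_i ; z_i − H_i ẑ_i]ᵀ X̄_i [G_i w_i − Ĝ_i ŵ_i ; z_i − H_i ẑ_i] ≤ 0. -/
open Matrix


private lemma bd_mulVec {N : ℕ} {m n : Fin N → ℕ}
    (X : ∀ i, Matrix (Fin (m i)) (Fin (n i)) ℝ)
    (u : ((i : Fin N) × Fin (n i)) → ℝ) (i : Fin N) (a : Fin (m i)) :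
    (blockDiagonal' X).mulVec u ⟨i, a⟩ = (X i).mulVec (fun b => u ⟨i, b⟩) a := by
  simp only [mulVec, dotProduct]
  rw [← Finset.univ_sigma_univ, Finset.sum_sigma]
  rw [Finset.sum_eq_single i]
  · simp [blockDiagonal'_apply_eq]
  · intro j _ hj
    apply Finset.sum_eq_zero
    intro b _
    rw [blockDiagonal'_apply_ne _ _ _ (fun h => hj h.symm), zero_mul]
  · simp

private lemma sigma_dot {N : ℕ} {n : Fin N → ℕ} (u v : ((i : Fin N) × Fin (n i)) → ℝ) :
    u ⬝ᵥ v = ∑ i, (fun a => u ⟨i, a⟩) ⬝ᵥ (fun a => v ⟨i, a⟩) := by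
  simp only [dotProduct]
  rw [← Finset.univ_sigma_univ, Finset.sum_sigma]

/-- dissipativity-type compositionality condition. With block-diagonal
`G, Ĝ, H`, the composite matrix `X_cmp`, and coupling matrices `M, M̂` satisfying
`[GM; I_{q̃}]ᵀ X_cmp [GM; I_{q̃}] ⪯ 0` and `GMH = ĜM̂`, the weighted sum of the subsystem
quadratic supply rates evaluated at `w = Mz`, `ŵ = M̂ẑ` is nonpositive. -/
theorem stmt_8
    (N : ℕ) (hN : 1 ≤ N)
    (r p ph q qh : Fin N → ℕ)
    (G : ∀ i, Matrix (Fin (r i)) (Fin (p i)) ℝ)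
    (Gh : ∀ i, Matrix (Fin (r i)) (Fin (ph i)) ℝ)
    (H : ∀ i, Matrix (Fin (q i)) (Fin (qh i)) ℝ)
    (X11 : ∀ i, Matrix (Fin (r i)) (Fin (r i)) ℝ)
    (X12 : ∀ i, Matrix (Fin (r i)) (Fin (q i)) ℝ)
    (X21 : ∀ i, Matrix (Fin (q i)) (Fin (r i)) ℝ)
    (X22 : ∀ i, Matrix (Fin (q i)) (Fin (q i)) ℝ)
    -- each `X̄_i` is symmetric:
    (hXsymm : ∀ i, (fromBlocks (X11 i) (X12 i) (X21 i) (X22 i)).IsSymm)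
    (μ : Fin N → ℝ) (hμ : ∀ i, 0 < μ i)
    (M : Matrix ((i : Fin N) × Fin (p i)) ((i : Fin N) × Fin (q i)) ℝ)
    (Mh : Matrix ((i : Fin N) × Fin (ph i)) ((i : Fin N) × Fin (qh i)) ℝ)
    -- `X_cmp`, `G`, `Ĝ`, `H` assembled from the blocks:
    (Xcmp : Matrix (((i : Fin N) × Fin (r i)) ⊕ ((i : Fin N) × Fin (q i)))
                   (((i : Fin N) × Fin (r i)) ⊕ ((i : Fin N) × Fin (q i))) ℝ)
    (hXcmp : Xcmp = fromBlocks
      (blockDiagonal' fun i => μ i • X11 i) (blockDiagonal' fun i => μ i • X12 i)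
      (blockDiagonal' fun i => μ i • X21 i) (blockDiagonal' fun i => μ i • X22 i))
    -- LMI condition `[GM; I_{q̃}]ᵀ X_cmp [GM; I_{q̃}] ⪯ 0`:
    (hLMI : ∀ z : ((i : Fin N) × Fin (q i)) → ℝ,
      z ⬝ᵥ ((fromRows (blockDiagonal' G * M) (1 : Matrix ((i : Fin N) × Fin (q i))
                ((i : Fin N) × Fin (q i)) ℝ))ᵀ *
            Xcmp *
            fromRows (blockDiagonal' G * M) (1 : Matrix ((i : Fin N) × Fin (q i))
                ((i : Fin N) × Fin (q i)) ℝ)).mulVec z ≤ 0)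
    -- matrix equality condition `GMH = ĜM̂`:
    (hGMH : blockDiagonal' G * M * blockDiagonal' H = blockDiagonal' Gh * Mh) :
    ∀ (z : ((i : Fin N) × Fin (q i)) → ℝ) (zh : ((i : Fin N) × Fin (qh i)) → ℝ),
      (∑ i : Fin N,
        μ i *
          (Sum.elim
              ((G i).mulVec (fun a => M.mulVec z ⟨i, a⟩) -
               (Gh i).mulVec (fun a => Mh.mulVec zh ⟨i, a⟩))
              ((fun a => z ⟨i, a⟩) - (H i).mulVec (fun a => zh ⟨i, a⟩)) ⬝ᵥ
            (fromBlocks (X11 i) (X12 i) (X21 i) (X22 i)).mulVec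
              (Sum.elim
                ((G i).mulVec (fun a => M.mulVec z ⟨i, a⟩) -
                 (Gh i).mulVec (fun a => Mh.mulVec zh ⟨i, a⟩))
                ((fun a => z ⟨i, a⟩) - (H i).mulVec (fun a => zh ⟨i, a⟩))))) ≤ 0 := by
  intro z zh
  set v : ((i : Fin N) × Fin (q i)) → ℝ := z - (blockDiagonal' H).mulVec zh with hv
  set w : ((i : Fin N) × Fin (r i)) → ℝ :=
    (blockDiagonal' G * M).mulVec z - (blockDiagonal' Gh * Mh).mulVec zh with hw
  have hwv : w = (blockDiagonal' G * M).mulVec v := by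
    rw [hw, hv, mulVec_sub, mulVec_mulVec, hGMH]
  have hζ1 : ∀ i : Fin N,
      ((G i).mulVec (fun a => M.mulVec z ⟨i, a⟩) -
       (Gh i).mulVec (fun a => Mh.mulVec zh ⟨i, a⟩)) = fun a => w ⟨i, a⟩ := by
    intro i; funext a
    rw [Pi.sub_apply, hw, Pi.sub_apply, ← mulVec_mulVec, ← mulVec_mulVec,
      bd_mulVec, bd_mulVec]
  have hζ2 : ∀ i : Fin N,
      ((fun a => z ⟨i, a⟩) - (H i).mulVec (fun a => zh ⟨i, a⟩)) = fun a => v ⟨i, a⟩ := by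
    intro i; funext a
    rw [Pi.sub_apply, hv, Pi.sub_apply, bd_mulVec]
  have key : (∑ i : Fin N,
      μ i *
        (Sum.elim (fun a => w ⟨i, a⟩) (fun a => v ⟨i, a⟩) ⬝ᵥ
          (fromBlocks (X11 i) (X12 i) (X21 i) (X22 i)).mulVec
            (Sum.elim (fun a => w ⟨i, a⟩) (fun a => v ⟨i, a⟩)))) =
      Sum.elim w v ⬝ᵥ Xcmp.mulVec (Sum.elim w v) := by
    rw [hXcmp, fromBlocks_mulVec, sumElim_dotProduct_sumElim,
      dotProduct_add, dotProduct_add, sigma_dot w, sigma_dot w, sigma_dot v, sigma_dot v,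
      ← Finset.sum_add_distrib, ← Finset.sum_add_distrib, ← Finset.sum_add_distrib]
    apply Finset.sum_congr rfl
    intro i _
    have e11 : ∀ a, (blockDiagonal' fun j => μ j • X11 j).mulVec w ⟨i, a⟩ =
        (μ i • X11 i).mulVec (fun b => w ⟨i, b⟩) a := fun a => bd_mulVec _ w i a
    have e12 : ∀ a, (blockDiagonal' fun j => μ j • X12 j).mulVec v ⟨i, a⟩ =
        (μ i • X12 i).mulVec (fun b => v ⟨i, b⟩) a := fun a => bd_mulVec _ v i a
    have e21 : ∀ a, (blockDiagonal' fun j => μ j • X21 j).mulVec w ⟨i, a⟩ =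
        (μ i • X21 i).mulVec (fun b => w ⟨i, b⟩) a := fun a => bd_mulVec _ w i a
    have e22 : ∀ a, (blockDiagonal' fun j => μ j • X22 j).mulVec v ⟨i, a⟩ =
        (μ i • X22 i).mulVec (fun b => v ⟨i, b⟩) a := fun a => bd_mulVec _ v i a
    simp only [← hw, ← hv, Fintype.sum_sum_type, fromBlocks_mulVec,
      sumElim_dotProduct_sumElim, dotProduct, Sum.elim_inl, Sum.elim_inr,
      Sum.elim_comp_inl, Sum.elim_comp_inr, Pi.add_apply, e11, e12, e21, e22,
      smul_mulVec, Pi.smul_apply, smul_eq_mul, Finset.mul_sum, mul_add,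
      Finset.sum_add_distrib]
    simp only [mul_comm, mul_assoc, mul_left_comm]
  have hA : Sum.elim w v =
      (fromRows (blockDiagonal' G * M)
        (1 : Matrix ((i : Fin N) × Fin (q i)) ((i : Fin N) × Fin (q i)) ℝ)).mulVec v := by
    rw [fromRows_mulVec, one_mulVec, hwv]
  calc (∑ i : Fin N,
        μ i *
          (Sum.elim
              ((G i).mulVec (fun a => M.mulVec z ⟨i, a⟩) -
               (Gh i).mulVec (fun a => Mh.mulVec zh ⟨i, a⟩))
              ((fun a => z ⟨i, a⟩) - (H i).mulVec (fun a => zh ⟨i, a⟩)) ⬝ᵥ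
            (fromBlocks (X11 i) (X12 i) (X21 i) (X22 i)).mulVec
              (Sum.elim
                ((G i).mulVec (fun a => M.mulVec z ⟨i, a⟩) -
                 (Gh i).mulVec (fun a => Mh.mulVec zh ⟨i, a⟩))
                ((fun a => z ⟨i, a⟩) - (H i).mulVec (fun a => zh ⟨i, a⟩)))))
      = Sum.elim w v ⬝ᵥ Xcmp.mulVec (Sum.elim w v) := by
        rw [← key]; apply Finset.sum_congr rfl; intro i _; rw [hζ1 i, hζ2 i]
    _ ≤ 0 := by
        have h := hLMI v
        rw [hA]
        rwa [← mulVec_mulVec, ← mulVec_mulVec, dotProduct_mulVec, vecMul_transpose] at h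
end

section
/- Let 𝒜 = (Q, q₀, Σ_a, F, t) be a DFA, L : Y → Σ_a a labeling function on Y ⊆ ℝ^q, ε > 0, let L^ε be the perturbed labeling and 𝒜' the modified DFA as in the context, let T ∈ ℕ, and let y, ŷ : {0,…,T} → Y satisfy ‖y(k) − ŷ(k)‖ < ε for every 0 ≤ k ≤ T. If the word (L^ε(ŷ(0)), …, L^ε(ŷ(T))) is accepted by 𝒜', then the word (L(y(0)), …, L(y(T))) is accepted by 𝒜. -/
open scoped Classical

/-- Run of a DFA with transition function `t`, started at `q0`, reading the word `w`. -/
def dfaRun {Q A : Type*} (t : Q → A → Q) (q0 : Q) (w : ℕ → A) : ℕ → Q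
  | 0 => q0
  | k + 1 => t (dfaRun t q0 w k) (w k)

/-- The word `(w 0, …, w T)` is accepted by the DFA `(Q, q0, A, F, t)`. -/
def dfaAccepts {Q A : Type*} (t : Q → A → Q) (q0 : Q) (F : Set Q) (T : ℕ) (w : ℕ → A) : Prop :=
  dfaRun t q0 w (T + 1) ∈ F

/-- The ε-deflated version `Aset^ε = {y ∈ Aset : ‖ȳ − y‖ ≥ ε for all ȳ ∈ Y \ Aset}` of a
subset `Aset` of `Y ⊆ ℝ^q`. -/
def deflated {q : ℕ} (Y : Set (EuclideanSpace ℝ (Fin q))) (Aset : Set Y) (ε : ℝ) : Set Y :=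
  {y | y ∈ Aset ∧ ∀ ybar : Y, ybar ∉ Aset →
    ε ≤ ‖(ybar : EuclideanSpace ℝ (Fin q)) - (y : EuclideanSpace ℝ (Fin q))‖}

/-- The perturbed labeling `L^ε : Y → Σ_a ∪ {φ∘}`, with the fresh letter `φ∘` encoded as
`none : Option A`. -/
noncomputable def pertLabel {q : ℕ} {A : Type*} (Y : Set (EuclideanSpace ℝ (Fin q)))
    (L : Y → A) (ε : ℝ) : Y → Option A := fun y =>
  if y ∈ deflated Y (L ⁻¹' {L y}) ε then some (L y) else none

/-- Transition function of the modified DFA `𝒜'`: the fresh absorbing location `q_abs` is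
encoded as `none : Option Q`; reading `φ∘ = none` from any location, or any letter from
`q_abs`, leads to `q_abs`. -/
def modTrans {Q A : Type*} (t : Q → A → Q) : Option Q → Option A → Option Q
  | some qq, some a => some (t qq a)
  | _, _ => none

lemma modTrans_some {Q A : Type*} (t : Q → A → Q) (x : Option Q) (a : Option A) (p : Q)
    (h : modTrans t x a = some p) :
    ∃ qq aa, x = some qq ∧ a = some aa ∧ p = t qq aa := by
  cases x with
  | none => simp [modTrans] at h
  | some qq =>
    cases a with
    | none => simp [modTrans] at h
    | some aa =>
      simp [modTrans] at h
      exact ⟨qq, aa, rfl, rfl, h.symm⟩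

/-- if two output trajectories stay `ε`-close up to time `T` and the
`L^ε`-labeled word of `ŷ` is accepted by the modified DFA `𝒜'`, then the `L`-labeled word of
`y` is accepted by `𝒜`. -/
theorem stmt_13
    {q : ℕ} {Q A : Type*} [Finite Q] [Finite A]
    (t : Q → A → Q) (q0 : Q) (F : Set Q)
    (Y : Set (EuclideanSpace ℝ (Fin q))) (L : Y → A)
    (ε : ℝ) (hε : 0 < ε) (T : ℕ)
    (y yh : ℕ → Y)
    (hclose : ∀ k ≤ T,
      ‖(y k : EuclideanSpace ℝ (Fin q)) - (yh k : EuclideanSpace ℝ (Fin q))‖ < ε)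
    (hacc : dfaAccepts (modTrans t) (some q0) (some '' F) T
      (fun k => pertLabel Y L ε (yh k))) :
    dfaAccepts t q0 F T (fun k => L (y k)) := by
  set w : ℕ → Option A := fun k => pertLabel Y L ε (yh k) with hw
  -- key: the modified run equals `some` of the original-DFA run on the word L ∘ y,
  -- as long as the modified run is `some` at the end.
  have key : ∀ k ≤ T + 1, ∀ p : Q,
      dfaRun (modTrans t) (some q0) w k = some p →
      p = dfaRun t q0 (fun k => L (y k)) k := by
    intro k
    induction k with
    | zero =>
      intro _ p hp
      simp [dfaRun] at hp
      simp [dfaRun, hp.symm]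
    | succ k ih =>
      intro hk p hp
      have hkT : k ≤ T + 1 := Nat.le_of_succ_le hk
      have hkT' : k ≤ T := Nat.lt_succ_iff.mp hk
      rw [show dfaRun (modTrans t) (some q0) w (k+1)
          = modTrans t (dfaRun (modTrans t) (some q0) w k) (w k) from rfl] at hp
      obtain ⟨qq, aa, hx, ha, hpt⟩ := modTrans_some t _ _ _ hp
      have hqq := ih hkT qq hx
      -- now analyze the letter
      have ha' : pertLabel Y L ε (yh k) = some aa := ha
      unfold pertLabel at ha'
      by_cases hmem : yh k ∈ deflated Y (L ⁻¹' {L (yh k)}) ε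
      · rw [if_pos hmem] at ha'
        have haa : aa = L (yh k) := (Option.some_injective _ ha').symm
        -- show L (y k) = L (yh k)
        have hLy : L (y k) = L (yh k) := by
          by_contra hne
          have hnot : y k ∉ L ⁻¹' {L (yh k)} := by
            simpa [Set.mem_preimage] using hne
          have := hmem.2 (y k) hnot
          exact absurd (hclose k hkT') (not_lt.mpr this)
        rw [show dfaRun t q0 (fun k => L (y k)) (k+1)
            = t (dfaRun t q0 (fun k => L (y k)) k) (L (y k)) from rfl]
        rw [hpt, hqq, haa, hLy]
      · rw [if_neg hmem] at ha'
        exact absurd ha' (by simp)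
  unfold dfaAccepts at hacc ⊢
  obtain ⟨p, hpF, hp⟩ := hacc
  have := key (T + 1) le_rfl p hp.symm
  rwa [this] at hpF
end

section
/- Let 𝒜 = (Q, q₀, Σ_a, F, t) be a DFA, L : Y → Σ_a a labeling function on Y ⊆ ℝ^q, ε > 0, L^ε the perturbed labeling and 𝒜' the modified DFA as in the context. Let T_d ∈ ℕ, δ ≥ 0, and let (Ω, ℱ, P) be a probability space with maps y, ŷ : Ω × {0,…,T_d} → Y such that each y(·,k) and ŷ(·,k) is measurable and the three events below are measurable. If P({ ω : ∃ 0 ≤ k ≤ T_d with ‖y(ω,k) − ŷ(ω,k)‖ ≥ ε }) ≤ δ, then P({ ω : the word (L^ε(ŷ(ω,0)), …, L^ε(ŷ(ω,T_d))) is accepted by 𝒜' }) − δ ≤ P({ ω : the word (L(y(ω,0)), …, L(y(ω,T_d))) is accepted by 𝒜 }). -/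
open MeasureTheory
open scoped Classical

/-- if the probability that the two output processes separate by at least `ε`
within the horizon `T` is at most `δ`, then the probability that the `L^ε`-labeled word of
`ŷ` is accepted by the modified DFA `𝒜'`, minus `δ`, lower-bounds the probability that the
`L`-labeled word of `y` is accepted by `𝒜`. -/
theorem stmt_14
    {q : ℕ} {Q A : Type*} [Finite Q] [Finite A]
    (t : Q → A → Q) (q0 : Q) (F : Set Q)
    (Y : Set (EuclideanSpace ℝ (Fin q))) (L : Y → A)
    (ε : ℝ) (hε : 0 < ε) (T : ℕ) (δ : ℝ) (hδ : 0 ≤ δ)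
    {Ω : Type*} [MeasurableSpace Ω] (P : Measure Ω) [IsProbabilityMeasure P]
    (y yh : Ω → ℕ → Y)
    (hymeas : ∀ k ≤ T, Measurable fun ω => (y ω k : EuclideanSpace ℝ (Fin q)))
    (hyhmeas : ∀ k ≤ T, Measurable fun ω => (yh ω k : EuclideanSpace ℝ (Fin q)))
    (hE1 : MeasurableSet {ω | ∃ k ≤ T,
      ε ≤ ‖(y ω k : EuclideanSpace ℝ (Fin q)) - (yh ω k : EuclideanSpace ℝ (Fin q))‖})
    (hE2 : MeasurableSet {ω | dfaAccepts (modTrans t) (some q0) (some '' F) T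
      (fun k => pertLabel Y L ε (yh ω k))})
    (hE3 : MeasurableSet {ω | dfaAccepts t q0 F T (fun k => L (y ω k))})
    (hclose : P {ω | ∃ k ≤ T,
        ε ≤ ‖(y ω k : EuclideanSpace ℝ (Fin q)) - (yh ω k : EuclideanSpace ℝ (Fin q))‖} ≤
      ENNReal.ofReal δ) :
    P {ω | dfaAccepts (modTrans t) (some q0) (some '' F) T
        (fun k => pertLabel Y L ε (yh ω k))} - ENNReal.ofReal δ ≤
    P {ω | dfaAccepts t q0 F T (fun k => L (y ω k))} := by
  set E1 := {ω | ∃ k ≤ T,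
      ε ≤ ‖(y ω k : EuclideanSpace ℝ (Fin q)) - (yh ω k : EuclideanSpace ℝ (Fin q))‖}
  set E2 := {ω | dfaAccepts (modTrans t) (some q0) (some '' F) T
      (fun k => pertLabel Y L ε (yh ω k))}
  set E3 := {ω | dfaAccepts t q0 F T (fun k => L (y ω k))}
  have hsub : E2 ⊆ E3 ∪ E1 := by
    intro ω hω
    by_cases h1 : ω ∈ E1
    · exact Or.inr h1
    · left
      have hclose' : ∀ k ≤ T,
          ‖(y ω k : EuclideanSpace ℝ (Fin q)) - (yh ω k : EuclideanSpace ℝ (Fin q))‖ < ε := by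
        intro k hk
        by_contra h
        exact h1 ⟨k, hk, le_of_not_gt h⟩
      -- key induction
      have key : ∀ n ≤ T + 1,
          dfaRun (modTrans t) (some q0) (fun k => pertLabel Y L ε (yh ω k)) n = none ∨
          dfaRun (modTrans t) (some q0) (fun k => pertLabel Y L ε (yh ω k)) n =
            some (dfaRun t q0 (fun k => L (y ω k)) n) := by
        intro n
        induction n with
        | zero => intro _; exact Or.inr rfl
        | succ n ih =>
          intro hn
          have hn' : n ≤ T := Nat.lt_succ_iff.mp hn
          rcases ih (le_of_lt (Nat.lt_succ_of_le (Nat.le_of_succ_le_succ hn))) with h | h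
          · left
            simp [dfaRun, h, modTrans]
          · by_cases hd : yh ω n ∈ deflated Y (L ⁻¹' {L (yh ω n)}) ε
            · right
              have hlab : pertLabel Y L ε (yh ω n) = some (L (yh ω n)) := by
                simp [pertLabel, hd]
              have hLeq : L (y ω n) = L (yh ω n) := by
                by_contra hne
                have := hd.2 (y ω n) (by simp [hne])
                exact absurd this (not_le.mpr (hclose' n hn'))
              simp only [dfaRun, h, hlab, modTrans, hLeq]
            · left
              have hlab : pertLabel Y L ε (yh ω n) = none := by
                simp [pertLabel, hd]
              simp [dfaRun, h, hlab, modTrans]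
      have hacc : dfaRun (modTrans t) (some q0) (fun k => pertLabel Y L ε (yh ω k)) (T + 1)
          ∈ some '' F := hω
      rcases key (T + 1) le_rfl with h | h
      · rw [h] at hacc
        rcases hacc with ⟨x, _, hx⟩
        exact absurd hx (by simp)
      · rw [h] at hacc
        rcases hacc with ⟨x, hxF, hx⟩
        have : x = dfaRun t q0 (fun k => L (y ω k)) (T + 1) := Option.some.inj hx
        show dfaRun t q0 (fun k => L (y ω k)) (T + 1) ∈ F
        exact this ▸ hxF
  have hPE2 : P E2 ≤ P E3 + ENNReal.ofReal δ :=
    le_trans (measure_mono hsub) (le_trans (measure_union_le _ _) (by gcongr))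
  exact tsub_le_iff_right.mpr hPE2
end

section
/- Let 𝒜 = (Q, q₀, Σ_a, F, t) be a DFA, L : Y → Σ_a a labeling function on Y ⊆ ℝ^q, ε > 0, and let L^{−ε} be the set-valued labeling defined from the ε-inflated sets as in the context. Let T_d ∈ ℕ, δ ≥ 0, and let (Ω, ℱ, P) be a probability space with maps y, ŷ : Ω × {0,…,T_d} → Y such that each y(·,k) and ŷ(·,k) is measurable and the three events below are measurable. If P({ ω : ∃ 0 ≤ k ≤ T_d with ‖y(ω,k) − ŷ(ω,k)‖ ≥ ε }) ≤ δ, then P({ ω : the word (L(y(ω,0)), …, L(y(ω,T_d))) is accepted by 𝒜 }) ≤ P({ ω : there exists a word (a₀,…,a_{T_d}) ∈ Σ_a^{T_d+1} with a_k ∈ L^{−ε}(ŷ(ω,k)) for every 0 ≤ k ≤ T_d that is accepted by 𝒜 }) + δ. -/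
open MeasureTheory

/-- The ε-inflated version `Aset^{−ε} = {y ∈ Y : ∃ ȳ ∈ Aset, ‖ȳ − y‖ < ε}` of a subset
`Aset` of `Y ⊆ ℝ^q`. -/
def inflated {q : ℕ} (Y : Set (EuclideanSpace ℝ (Fin q))) (Aset : Set Y) (ε : ℝ) : Set Y :=
  {y | ∃ ybar ∈ Aset,
    ‖(ybar : EuclideanSpace ℝ (Fin q)) - (y : EuclideanSpace ℝ (Fin q))‖ < ε}

/-- The set-valued labeling `L^{−ε} : Y → 2^{Σ_a}`, `L^{−ε}(y) = {a : y ∈ [L⁻¹(a)]^{−ε}}`. -/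
def infLabel {q : ℕ} {A : Type*} (Y : Set (EuclideanSpace ℝ (Fin q)))
    (L : Y → A) (ε : ℝ) : Y → Set A := fun y =>
  {a | y ∈ inflated Y (L ⁻¹' {a}) ε}

/-- upper bound on the satisfaction probability via the set-valued labeling
`L^{−ε}` on the abstract trajectories. -/
theorem stmt_15
    {q : ℕ} {Q A : Type*} [Finite Q] [Finite A]
    (t : Q → A → Q) (q0 : Q) (F : Set Q)
    (Y : Set (EuclideanSpace ℝ (Fin q))) (L : Y → A)
    (ε : ℝ) (hε : 0 < ε) (T : ℕ) (δ : ℝ) (hδ : 0 ≤ δ)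
    {Ω : Type*} [MeasurableSpace Ω] (P : Measure Ω) [IsProbabilityMeasure P]
    (y yh : Ω → ℕ → Y)
    (hymeas : ∀ k ≤ T, Measurable fun ω => (y ω k : EuclideanSpace ℝ (Fin q)))
    (hyhmeas : ∀ k ≤ T, Measurable fun ω => (yh ω k : EuclideanSpace ℝ (Fin q)))
    (hE1 : MeasurableSet {ω | ∃ k ≤ T,
      ε ≤ ‖(y ω k : EuclideanSpace ℝ (Fin q)) - (yh ω k : EuclideanSpace ℝ (Fin q))‖})
    (hE2 : MeasurableSet {ω | dfaAccepts t q0 F T (fun k => L (y ω k))})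
    (hE3 : MeasurableSet {ω | ∃ a : ℕ → A,
      (∀ k ≤ T, a k ∈ infLabel Y L ε (yh ω k)) ∧ dfaAccepts t q0 F T a})
    (hclose : P {ω | ∃ k ≤ T,
        ε ≤ ‖(y ω k : EuclideanSpace ℝ (Fin q)) - (yh ω k : EuclideanSpace ℝ (Fin q))‖} ≤
      ENNReal.ofReal δ) :
    P {ω | dfaAccepts t q0 F T (fun k => L (y ω k))} ≤
    P {ω | ∃ a : ℕ → A,
        (∀ k ≤ T, a k ∈ infLabel Y L ε (yh ω k)) ∧ dfaAccepts t q0 F T a} +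
      ENNReal.ofReal δ := by
  have hsub : {ω | dfaAccepts t q0 F T (fun k => L (y ω k))} ⊆
      {ω | ∃ a : ℕ → A,
        (∀ k ≤ T, a k ∈ infLabel Y L ε (yh ω k)) ∧ dfaAccepts t q0 F T a} ∪
      {ω | ∃ k ≤ T,
        ε ≤ ‖(y ω k : EuclideanSpace ℝ (Fin q)) - (yh ω k : EuclideanSpace ℝ (Fin q))‖} := by
    intro ω hω
    by_cases h : ∃ k ≤ T,
        ε ≤ ‖(y ω k : EuclideanSpace ℝ (Fin q)) - (yh ω k : EuclideanSpace ℝ (Fin q))‖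
    · exact Or.inr h
    · push_neg at h
      refine Or.inl ⟨fun k => L (y ω k), fun k hk => ⟨y ω k, rfl, h k hk⟩, hω⟩
  calc P {ω | dfaAccepts t q0 F T (fun k => L (y ω k))} ≤ _ := measure_mono hsub
    _ ≤ _ + _ := measure_union_le _ _
    _ ≤ _ := add_le_add le_rfl hclose
end
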